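/- arXiv:0811.4159 — 9 statements merged into one kernel-verified Lean document; each statement's English description precedes it below -/
import Mathlib

section
/- Let A be a commutative ring, let 1 ≤ m ≤ k, and let λ = (λ_1,…,λ_k) be a multi-index all of whose entries are positive. Then every monomial occurring with nonzero coefficient in δ_m(x^λ) ∈ A[x_0,x_1,…,x_k] is divisible by each of the variables x_0, x_1, …, x_k; equivalently, δ_m(x^λ) lies in the ideal generated by the product x_0·x_1⋯x_k. -/
open MvPolynomial

/-- The `m`-coboundary map `δ_m` on polynomials in `k` variables `x_1, …, x_k`
(indexed by `Fin k`, with `j : Fin k` standing for the variable `x_{j+1}`),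
landing in polynomials in the variables `x_0, …, x_k` (indexed by `Fin (k+1)`). -/
noncomputable def delta (A : Type*) [CommRing A] (m k : ℕ)
    (f : MvPolynomial (Fin k) A) : MvPolynomial (Fin (k + 1)) A :=
  aeval (fun j : Fin k => (X j.succ : MvPolynomial (Fin (k + 1)) A)) f
    + ∑ i ∈ Finset.Icc 1 m, (-1 : MvPolynomial (Fin (k + 1)) A) ^ i *
        aeval (fun j : Fin k =>
          if (j : ℕ) + 1 < i then (X j.castSucc : MvPolynomial (Fin (k + 1)) A)
          else if (j : ℕ) + 1 = i then X j.castSucc + X j.succ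
          else X j.succ) f
    + (-1 : MvPolynomial (Fin (k + 1)) A) ^ (m + 1) *
        aeval (fun j : Fin k =>
          if (j : ℕ) + 1 ≤ m then (X j.castSucc : MvPolynomial (Fin (k + 1)) A)
          else X j.succ) f

/-- The monomial symmetric polynomial `τ λ` associated to a multi-index
`λ : Fin k → ℕ`: the sum of `x^μ` over the distinct rearrangements `μ` of `λ`. -/
noncomputable def tau (A : Type*) [CommRing A] {k : ℕ} (lam : Fin k → ℕ) :
    MvPolynomial (Fin k) A :=
  ∑ d ∈ (Finset.univ : Finset (Equiv.Perm (Fin k))).image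
      (fun σ => Finsupp.equivFunOnFinite.symm (fun i => lam (σ i))),
    monomial d (1 : A)

/-- The multiset of values of a multi-index `Fin k → ℕ`. -/
def multisetOf {k : ℕ} (lam : Fin k → ℕ) : Multiset ℕ :=
  Multiset.map lam Finset.univ.val

/-- The exponent multiset of an exponent vector `d : Fin k →₀ ℕ`. -/
def exMult {k : ℕ} (d : Fin k →₀ ℕ) : Multiset ℕ :=
  multisetOf (⇑d)

/-- `σ_p(n)`, the sum of the digits of `n` in base `p`. -/
def sigmaDigits (p n : ℕ) : ℕ := (Nat.digits p n).sum

/-- `α_p(λ)`, the number of carries when summing the entries of `λ` in base `p`;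
equivalently the `p`-adic valuation of the multinomial coefficient of `λ`. -/
def alphaCarry (p : ℕ) (s : Multiset ℕ) : ℕ :=
  padicValNat p (Nat.factorial s.sum / (s.map Nat.factorial).prod)

/-- The splitting distance `φ_p(λ) = (Σ_i σ_p(λ_i)) − |λ|`. -/
def phiSplit (p : ℕ) (s : Multiset ℕ) : ℕ :=
  (s.map (sigmaDigits p)).sum - Multiset.card s

/-- A multiset is power-of-`p` when all its entries are powers of `p`. -/
def IsPowOf (p : ℕ) (s : Multiset ℕ) : Prop := ∀ x ∈ s, ∃ a : ℕ, x = p ^ a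

/-- `λ` is `p`-carry-minimal: `α_p(λ) ≤ α_p(μ)` for every multiset `μ` of positive
integers with the same sum and the same number of entries as `λ`. -/
def IsCarryMin (p : ℕ) (s : Multiset ℕ) : Prop :=
  ∀ t : Multiset ℕ, (∀ x ∈ t, 0 < x) → t.sum = s.sum →
    Multiset.card t = Multiset.card s → alphaCarry p s ≤ alphaCarry p t

/-- A single gathering operation: replace two entries `a`, `b` by `a + b`. -/
def Gathers (s t : Multiset ℕ) : Prop :=
  ∃ a b u, s = a ::ₘ b ::ₘ u ∧ t = (a + b) ::ₘ u

/-- `gatherSet m λ = T^m(λ)`, the set of multisets obtained from `λ` by `m`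
successive gathering operations. -/
def gatherSet : ℕ → Multiset ℕ → Set (Multiset ℕ)
  | 0, s => {s}
  | m + 1, s => {t | ∃ u ∈ gatherSet m s, Gathers u t}

/-- One step of the annihilating-set construction: split an entry `x = a + b`
(with `a, b > 0` and no base-`p` carries in `a + b`), and add `b` onto another
entry `y`. -/
def AnnStep (p : ℕ) (μ ν : Multiset ℕ) : Prop :=
  ∃ (x y a b : ℕ) (u : Multiset ℕ), μ = x ::ₘ y ::ₘ u ∧ 0 < a ∧ 0 < b ∧ a + b = x ∧
    sigmaDigits p a + sigmaDigits p b = sigmaDigits p x ∧ ν = a ::ₘ (b + y) ::ₘ u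

/-- `ann_p(λ)`: the smallest set of multisets containing `λ` closed under `AnnStep`. -/
def annSet (p : ℕ) (lam : Multiset ℕ) : Set (Multiset ℕ) :=
  {μ | Relation.ReflTransGen (AnnStep p) lam μ}

/-- The `m`-coboundary map as a linear map. -/
noncomputable def deltaLM (A : Type*) [CommRing A] (m k : ℕ) :
    MvPolynomial (Fin k) A →ₗ[A] MvPolynomial (Fin (k + 1)) A :=
  (aeval (fun j : Fin k => (X j.succ : MvPolynomial (Fin (k + 1)) A))).toLinearMap
    + ∑ i ∈ Finset.Icc 1 m, ((-1 : A) ^ i) •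
        (aeval (fun j : Fin k =>
          if (j : ℕ) + 1 < i then (X j.castSucc : MvPolynomial (Fin (k + 1)) A)
          else if (j : ℕ) + 1 = i then X j.castSucc + X j.succ
          else X j.succ)).toLinearMap
    + ((-1 : A) ^ (m + 1)) •
        (aeval (fun j : Fin k =>
          if (j : ℕ) + 1 ≤ m then (X j.castSucc : MvPolynomial (Fin (k + 1)) A)
          else X j.succ)).toLinearMap
set_option maxHeartbeats 1000000

lemma abdvd {R : Type*} [CommRing R] (a b : R) (n : ℕ) (hn : 1 ≤ n) :
    a * b ∣ (a + b) ^ n - a ^ n - b ^ n := by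
  obtain ⟨p, rfl⟩ : ∃ p, n = p + 1 := ⟨n - 1, by omega⟩
  clear hn
  induction p with
  | zero => exact ⟨0, by ring⟩
  | succ p ih =>
    obtain ⟨c, hc⟩ := ih
    exact ⟨(a + b) * c + a ^ p + b ^ p, by linear_combination (a + b) * hc⟩

lemma delta_dvd (A : Type*) [CommRing A] (k m : ℕ) (hm : 1 ≤ m) (hmk : m ≤ k)
    (lam : Fin k → ℕ) (hpos : ∀ i, 0 < lam i) :
    (∏ i : Fin (k + 1), (X i : MvPolynomial (Fin (k + 1)) A)) ∣
      delta A m k (monomial (Finsupp.equivFunOnFinite.symm lam) (1 : A)) := by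
  set F : ℕ → MvPolynomial (Fin (k + 1)) A := fun i =>
    ∏ j : Fin k, (if (j : ℕ) + 1 < i then (X j.castSucc : MvPolynomial (Fin (k + 1)) A)
      else X j.succ) ^ lam j with hF
  set P : ℕ → MvPolynomial (Fin (k + 1)) A := fun i =>
    ∏ j : Fin k, (if (j : ℕ) + 1 < i then (X j.castSucc : MvPolynomial (Fin (k + 1)) A)
      else if (j : ℕ) + 1 = i then X j.castSucc + X j.succ
      else X j.succ) ^ lam j with hP
  have haev : ∀ g : Fin k → MvPolynomial (Fin (k + 1)) A,
      aeval g (monomial (Finsupp.equivFunOnFinite.symm lam) (1 : A)) = ∏ j, g j ^ lam j := by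
    intro g
    rw [aeval_monomial, map_one, one_mul, Finsupp.prod_fintype _ _ (fun i => pow_zero _)]
    simp
  -- Step B : delta in terms of F and P
  have hB : delta A m k (monomial (Finsupp.equivFunOnFinite.symm lam) (1 : A))
      = F 1 + (∑ i ∈ Finset.Icc 1 m, (-1) ^ i * P i) + (-1) ^ (m + 1) * F (m + 1) := by
    rw [delta]
    simp only [haev, hF, hP]
    have e1 : (∏ j : Fin k, (X j.succ : MvPolynomial (Fin (k + 1)) A) ^ lam j)
        = ∏ j : Fin k, (if (j : ℕ) + 1 < 1 then (X j.castSucc : MvPolynomial (Fin (k + 1)) A)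
            else X j.succ) ^ lam j :=
      Finset.prod_congr rfl fun j _ => by rw [if_neg (by omega)]
    have e2 : (∏ j : Fin k, (if (j : ℕ) + 1 ≤ m then (X j.castSucc : MvPolynomial (Fin (k + 1)) A)
            else X j.succ) ^ lam j)
        = ∏ j : Fin k, (if (j : ℕ) + 1 < m + 1 then (X j.castSucc : MvPolynomial (Fin (k + 1)) A)
            else X j.succ) ^ lam j :=
      Finset.prod_congr rfl fun j _ => by
        congr 1
        exact if_congr (by omega) rfl rfl
    rw [e1, e2]
  -- telescoping
  have htel : ∑ i ∈ Finset.Icc 1 m, ((-1 : MvPolynomial (Fin (k + 1)) A) ^ i * F i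
        - (-1) ^ (i + 1) * F (i + 1))
      = (-1) ^ 1 * F 1 - (-1) ^ (m + 1) * F (m + 1) := by
    have : Finset.Icc 1 m = Finset.Ico 1 (m + 1) := by rfl
    rw [this, Finset.sum_Ico_eq_sum_range]
    simp only [Nat.add_sub_cancel]
    have := Finset.sum_range_sub'
      (fun i => ((-1 : MvPolynomial (Fin (k + 1)) A) ^ (1 + i) * F (1 + i))) m
    simpa [add_comm, add_assoc, add_left_comm] using this
  have key : delta A m k (monomial (Finsupp.equivFunOnFinite.symm lam) (1 : A))
      = ∑ i ∈ Finset.Icc 1 m, (-1) ^ i * (P i - F i - F (i + 1)) := by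
    rw [hB]
    have h2 : ∑ i ∈ Finset.Icc 1 m, ((-1 : MvPolynomial (Fin (k + 1)) A) ^ i
          * (P i - F i - F (i + 1)))
        = ∑ i ∈ Finset.Icc 1 m, (-1) ^ i * P i
          - ∑ i ∈ Finset.Icc 1 m, ((-1) ^ i * F i - (-1) ^ (i + 1) * F (i + 1)) := by
      rw [← Finset.sum_sub_distrib]
      apply Finset.sum_congr rfl; intro i _; ring
    rw [h2, htel]
    ring
  rw [key]
  apply Finset.dvd_sum
  intro i hi
  apply Dvd.dvd.mul_left
  -- now the main divisibility
  rw [Finset.mem_Icc] at hi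
  set i₀ : Fin k := ⟨i - 1, by omega⟩ with hi₀
  have hival : (i₀ : ℕ) + 1 = i := by simp [hi₀]; omega
  set a : MvPolynomial (Fin (k + 1)) A := X i₀.castSucc with ha
  set b : MvPolynomial (Fin (k + 1)) A := X i₀.succ with hb
  set v : Fin k → MvPolynomial (Fin (k + 1)) A := fun j => X (i₀.castSucc.succAbove j) with hv
  have hveq : ∀ j : Fin k, j ≠ i₀ →
      ((if (j : ℕ) + 1 < i then (X j.castSucc : MvPolynomial (Fin (k + 1)) A)
        else X j.succ) = v j
      ∧ (if (j : ℕ) + 1 < i then (X j.castSucc : MvPolynomial (Fin (k + 1)) A)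
          else if (j : ℕ) + 1 = i then X j.castSucc + X j.succ else X j.succ) = v j
      ∧ (if (j : ℕ) + 1 < i + 1 then (X j.castSucc : MvPolynomial (Fin (k + 1)) A)
          else X j.succ) = v j) := by
    intro j hj
    have hjv : (j : ℕ) ≠ i - 1 := fun h => hj (Fin.ext h)
    rcases lt_or_gt_of_ne hjv with h | h
    · have hc : i₀.castSucc.succAbove j = j.castSucc :=
        Fin.succAbove_of_castSucc_lt _ _
          (by rw [Fin.castSucc_lt_castSucc_iff, Fin.lt_def]; exact h)
      refine ⟨?_, ?_, ?_⟩ <;> (simp only [hv]; rw [hc, if_pos (by omega)])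
    · have hc : i₀.castSucc.succAbove j = j.succ :=
        Fin.succAbove_of_le_castSucc _ _
          (by rw [Fin.castSucc_le_castSucc_iff, Fin.le_def]; exact le_of_lt h)
      refine ⟨?_, ?_, ?_⟩
      · simp only [hv]; rw [hc, if_neg (by omega)]
      · simp only [hv]; rw [hc, if_neg (by omega), if_neg (by omega)]
      · simp only [hv]; rw [hc, if_neg (by omega)]
  have hvi₀ : v i₀ = b := by
    have h : i₀.castSucc.succAbove i₀ = i₀.succ := Fin.succAbove_of_le_castSucc _ _ le_rfl
    simp only [hv, hb, h]
  have hprodX : (∏ t : Fin (k + 1), (X t : MvPolynomial (Fin (k + 1)) A))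
      = a * b * ∏ j ∈ Finset.univ.erase i₀, v j := by
    rw [Fin.prod_univ_succAbove (fun t => (X t : MvPolynomial (Fin (k + 1)) A)) i₀.castSucc,
      ← Finset.mul_prod_erase Finset.univ v (Finset.mem_univ i₀), hvi₀, ← ha]
    ring
  have hPd : P i = (a + b) ^ lam i₀ * ∏ j ∈ Finset.univ.erase i₀, v j ^ lam j := by
    simp only [hP]
    rw [← Finset.mul_prod_erase Finset.univ _ (Finset.mem_univ i₀)]
    congr 1
    · rw [if_neg (by omega), if_pos hival]
    · exact Finset.prod_congr rfl fun j hj => by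
        rw [(hveq j (Finset.ne_of_mem_erase hj)).2.1]
  have hFd : F i = b ^ lam i₀ * ∏ j ∈ Finset.univ.erase i₀, v j ^ lam j := by
    simp only [hF]
    rw [← Finset.mul_prod_erase Finset.univ _ (Finset.mem_univ i₀)]
    congr 1
    · rw [if_neg (by omega)]
    · exact Finset.prod_congr rfl fun j hj => by
        rw [(hveq j (Finset.ne_of_mem_erase hj)).1]
  have hFd' : F (i + 1) = a ^ lam i₀ * ∏ j ∈ Finset.univ.erase i₀, v j ^ lam j := by
    simp only [hF]
    rw [← Finset.mul_prod_erase Finset.univ _ (Finset.mem_univ i₀)]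
    congr 1
    · rw [if_pos (by omega)]
    · exact Finset.prod_congr rfl fun j hj => by
        rw [(hveq j (Finset.ne_of_mem_erase hj)).2.2]
  rw [hPd, hFd, hFd', hprodX]
  have h1 : a * b ∣ (a + b) ^ lam i₀ - a ^ lam i₀ - b ^ lam i₀ := abdvd a b _ (hpos i₀)
  have h2 : (∏ j ∈ Finset.univ.erase i₀, v j) ∣ ∏ j ∈ Finset.univ.erase i₀, v j ^ lam j :=
    Finset.prod_dvd_prod_of_dvd _ _ fun j _ => dvd_pow_self _ (hpos j).ne'
  have := mul_dvd_mul h1 h2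
  have heq : (a + b) ^ lam i₀ * ∏ j ∈ Finset.univ.erase i₀, v j ^ lam j
      - b ^ lam i₀ * ∏ j ∈ Finset.univ.erase i₀, v j ^ lam j
      - a ^ lam i₀ * ∏ j ∈ Finset.univ.erase i₀, v j ^ lam j
      = ((a + b) ^ lam i₀ - a ^ lam i₀ - b ^ lam i₀)
        * ∏ j ∈ Finset.univ.erase i₀, v j ^ lam j := by ring
  rw [heq]
  exact this

/-- If all entries of `λ` are positive, then every monomial of
`δ_m(x^λ)` is divisible by each of `x_0, …, x_k`; equivalently `δ_m(x^λ)` lies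
in the ideal generated by `x_0 ⋯ x_k`. -/
theorem statement1 (A : Type*) [CommRing A] (k m : ℕ) (hm : 1 ≤ m) (hmk : m ≤ k)
    (lam : Fin k → ℕ) (hpos : ∀ i, 0 < lam i) :
    (∀ d : Fin (k + 1) →₀ ℕ,
        MvPolynomial.coeff d
          (delta A m k (monomial (Finsupp.equivFunOnFinite.symm lam) (1 : A))) ≠ 0 →
        ∀ i : Fin (k + 1), 0 < d i) ∧
      delta A m k (monomial (Finsupp.equivFunOnFinite.symm lam) (1 : A)) ∈
        Ideal.span {∏ i : Fin (k + 1), (X i : MvPolynomial (Fin (k + 1)) A)} := by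
  
  have hdvd := delta_dvd A k m hm hmk lam hpos
  refine ⟨?_, Ideal.mem_span_singleton.mpr hdvd⟩
  obtain ⟨q, hq⟩ := hdvd
  intro d hne i
  by_contra h0
  have hd0 : d i = 0 := by omega
  apply hne
  rw [hq, ← Finset.mul_prod_erase Finset.univ _ (Finset.mem_univ i)]
  have : (X i : MvPolynomial (Fin (k + 1)) A) * (∏ t ∈ Finset.univ.erase i, X t) * q
      = ((∏ t ∈ Finset.univ.erase i, X t) * q) * X i := by ring
  rw [this, coeff_mul_X']
  rw [if_neg (by simp [Finsupp.mem_support_iff, hd0])]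
end

section
/- Let p be a prime, let A be a commutative ring of characteristic p, let 1 ≤ m ≤ k, and let λ = (λ_1,…,λ_k) be a multi-index whose first m entries are powers of p (λ_i = p^{a_i} for 1 ≤ i ≤ m, the remaining entries arbitrary natural numbers). Then δ_m(x^λ) = 0 in A[x_0,x_1,…,x_k]; that is, the monomial x^λ is an m-cocycle. -/
open MvPolynomial

/-- Over a commutative ring of characteristic `p`, a monomial
whose first `m` exponents are powers of `p` is an `m`-cocycle. -/
theorem statement2 (p : ℕ) (hp : p.Prime) (A : Type*) [CommRing A] [CharP A p]
    (k m : ℕ) (hm : 1 ≤ m) (hmk : m ≤ k) (lam : Fin k → ℕ)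
    (hpow : ∀ i : Fin k, (i : ℕ) < m → ∃ a : ℕ, lam i = p ^ a) :
    delta A m k (monomial (Finsupp.equivFunOnFinite.symm lam) (1 : A)) = 0 := by
  classical
  haveI := Fact.mk hp
  set d := Finsupp.equivFunOnFinite.symm lam with hd
  have haev : ∀ (g : Fin k → MvPolynomial (Fin (k+1)) A),
      aeval g (monomial d (1:A)) = ∏ j : Fin k, g j ^ lam j := by
    intro g
    rw [aeval_monomial, map_one, one_mul, Finsupp.prod_fintype]
    · refine Finset.prod_congr rfl fun j _ => ?_
      simp [hd]
    · intro i; exact pow_zero _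
  set P : ℕ → MvPolynomial (Fin (k+1)) A := fun i =>
    ∏ j : Fin k, (if (j:ℕ)+1 ≤ i then X j.castSucc else X j.succ :
      MvPolynomial (Fin (k+1)) A) ^ lam j with hP
  have hC : ∀ i ∈ Finset.Icc 1 m,
      ((-1 : MvPolynomial (Fin (k + 1)) A) ^ i *
        aeval (fun j : Fin k =>
          if (j : ℕ) + 1 < i then (X j.castSucc : MvPolynomial (Fin (k + 1)) A)
          else if (j : ℕ) + 1 = i then X j.castSucc + X j.succ
          else X j.succ) (monomial d (1:A))) = (-1)^i * (P (i-1) + P i) := by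
    intro i hi
    obtain ⟨hi1, him⟩ := Finset.mem_Icc.mp hi
    rw [haev]
    congr 1
    set t : Fin k := ⟨i-1, by omega⟩ with ht
    have htv : (t:ℕ)+1 = i := Nat.succ_pred_eq_of_pos hi1
    obtain ⟨a, ha⟩ := hpow t (by omega)
    rw [Finset.prod_eq_mul_prod_sdiff_singleton_of_mem (Finset.mem_univ t)]
    have hfac : (if (t:ℕ)+1 < i then (X t.castSucc : MvPolynomial (Fin (k+1)) A)
        else if (t:ℕ)+1 = i then X t.castSucc + X t.succ else X t.succ) ^ lam t
        = X t.castSucc ^ lam t + X t.succ ^ lam t := by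
      rw [if_neg (by omega), if_pos htv, ha, add_pow_char_pow]
    rw [hfac, add_mul]
    have hPsplit : ∀ c : ℕ, P c = (if (t:ℕ)+1 ≤ c then (X t.castSucc :
        MvPolynomial (Fin (k+1)) A) else X t.succ) ^ lam t *
        ∏ j ∈ Finset.univ \ {t}, (if (j:ℕ)+1 ≤ c then (X j.castSucc :
          MvPolynomial (Fin (k+1)) A) else X j.succ) ^ lam j := fun c =>
      Finset.prod_eq_mul_prod_sdiff_singleton_of_mem (Finset.mem_univ t) _
    have hrest : ∀ j ∈ Finset.univ \ {t}, ((j:ℕ)+1 ≠ i) := by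
      intro j hj
      have : j ≠ t := (Finset.mem_sdiff.mp hj).2 ∘ Finset.mem_singleton.mpr
      intro h
      exact this (Fin.ext (by omega))
    rw [hPsplit i, hPsplit (i-1), if_pos (le_of_eq htv), if_neg (by rw [htv]; omega)]
    set H := ∏ j ∈ Finset.univ \ {t},
      (if (j:ℕ)+1 < i then (X j.castSucc : MvPolynomial (Fin (k+1)) A)
        else if (j:ℕ)+1 = i then X j.castSucc + X j.succ else X j.succ) ^ lam j with hH
    have e1 : ∀ j ∈ Finset.univ \ {t},
        (if (j:ℕ)+1 < i then (X j.castSucc : MvPolynomial (Fin (k+1)) A)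
          else if (j:ℕ)+1 = i then X j.castSucc + X j.succ else X j.succ) ^ lam j
        = (if (j:ℕ)+1 ≤ i then (X j.castSucc : MvPolynomial (Fin (k+1)) A)
          else X j.succ) ^ lam j := by
      intro j hj
      have := hrest j hj
      by_cases h : (j:ℕ)+1 < i
      · rw [if_pos h, if_pos (by omega)]
      · rw [if_neg h, if_neg (by omega), if_neg (by omega)]
    have e2 : ∀ j ∈ Finset.univ \ {t},
        (if (j:ℕ)+1 < i then (X j.castSucc : MvPolynomial (Fin (k+1)) A)
          else if (j:ℕ)+1 = i then X j.castSucc + X j.succ else X j.succ) ^ lam j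
        = (if (j:ℕ)+1 ≤ i-1 then (X j.castSucc : MvPolynomial (Fin (k+1)) A)
          else X j.succ) ^ lam j := by
      intro j hj
      have := hrest j hj
      by_cases h : (j:ℕ)+1 < i
      · rw [if_pos h, if_pos (by omega)]
      · rw [if_neg h, if_neg (by omega), if_neg (by omega)]
    rw [show (∏ j ∈ Finset.univ \ {t}, (if (j:ℕ)+1 ≤ i then (X j.castSucc :
        MvPolynomial (Fin (k+1)) A) else X j.succ) ^ lam j) = H from
        (Finset.prod_congr rfl e1).symm,
      show (∏ j ∈ Finset.univ \ {t}, (if (j:ℕ)+1 ≤ i-1 then (X j.castSucc :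
        MvPolynomial (Fin (k+1)) A) else X j.succ) ^ lam j) = H from
        (Finset.prod_congr rfl e2).symm]
    ring
  rw [delta, haev, haev, Finset.sum_congr rfl hC]
  have h1 : (∏ j : Fin k, (X j.succ : MvPolynomial (Fin (k+1)) A) ^ lam j) = P 0 := by
    simp only [hP, Nat.add_one_le_iff, Nat.not_lt_zero, if_false]
  have h3 : (∏ j : Fin k, (if (j:ℕ)+1 ≤ m then (X j.castSucc :
      MvPolynomial (Fin (k+1)) A) else X j.succ) ^ lam j) = P m := rfl
  rw [h1, h3, ← Finset.Ico_add_one_right_eq_Icc, Finset.sum_Ico_eq_sum_range,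
    show m + 1 - 1 = m from rfl]
  have hterm : ∀ j, ((-1 : MvPolynomial (Fin (k+1)) A))^(1+j) * (P (1+j-1) + P (1+j))
      = (-1)^(j+1) * P (j+1) - (-1)^j * P j := by
    intro j
    have : 1 + j - 1 = j := by omega
    rw [this, Nat.add_comm 1 j]
    ring
  rw [Finset.sum_congr rfl fun j _ => hterm j, Finset.sum_range_sub
    (fun j => ((-1 : MvPolynomial (Fin (k+1)) A))^j * P j)]
  ring
end

section
/- Let p be a prime, let 1 ≤ m ≤ k, and let λ be a power-of-p multi-index of length k. Then δ_m(τλ) = 0 in Z_p[x_0,x_1,…,x_k]; that is, the monomial symmetric polynomial τλ is an m-cocycle over Z_p = Z/pZ. -/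
open MvPolynomial

section Aux

lemma aeval_mono {A : Type*} [CommRing A] {k : ℕ} {σ : Type*}
    (f : Fin k → MvPolynomial σ A) (d : Fin k →₀ ℕ) :
    aeval f (monomial d (1 : A)) = ∏ j, f j ^ d j := by
  rw [aeval_monomial, map_one, one_mul]
  exact Finsupp.prod_fintype _ _ (fun i => pow_zero _)

lemma telescope_aux {R : Type*} [CommRing R] (G : ℕ → R) (m : ℕ) :
    G 0 + (∑ i ∈ Finset.Icc 1 m, (-1 : R) ^ i * (G i + G (i - 1)))
      + (-1 : R) ^ (m + 1) * G m = 0 := by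
  induction m with
  | zero => simp
  | succ m ih =>
    rw [Finset.sum_Icc_succ_top (by omega : 1 ≤ m + 1)]
    have h : m + 1 - 1 = m := rfl
    rw [h]
    linear_combination ih

lemma delta_add {A : Type*} [CommRing A] (m k : ℕ) (f g : MvPolynomial (Fin k) A) :
    delta A m k (f + g) = delta A m k f + delta A m k g := by
  simp only [delta, map_add, mul_add, Finset.sum_add_distrib]
  ring

lemma delta_sum {A : Type*} [CommRing A] (m k : ℕ) {ι : Type*} (s : Finset ι)
    (f : ι → MvPolynomial (Fin k) A) :
    delta A m k (∑ d ∈ s, f d) = ∑ d ∈ s, delta A m k (f d) := by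
  induction s using Finset.cons_induction with
  | empty => simp [delta]
  | cons a s ha ih => rw [Finset.sum_cons, Finset.sum_cons, delta_add, ih]

lemma delta_monomial (p : ℕ) (hp : p.Prime) (k m : ℕ) (hmk : m ≤ k)
    (d : Fin k →₀ ℕ) (hd : ∀ j, ∃ a : ℕ, d j = p ^ a) :
    delta (ZMod p) m k (monomial d (1 : ZMod p)) = 0 := by
  haveI : Fact p.Prime := ⟨hp⟩
  set G : ℕ → MvPolynomial (Fin (k + 1)) (ZMod p) := fun n =>
    ∏ i : Fin k, (if (i : ℕ) + 1 ≤ n then (X i.castSucc : MvPolynomial (Fin (k + 1)) (ZMod p))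
      else X i.succ) ^ d i with hG
  have e0 : aeval (fun j : Fin k => (X j.succ : MvPolynomial (Fin (k + 1)) (ZMod p)))
      (monomial d (1 : ZMod p)) = G 0 := by
    rw [aeval_mono, hG]
    exact Finset.prod_congr rfl (fun j _ => by simp)
  have em : aeval (fun j : Fin k =>
        if (j : ℕ) + 1 ≤ m then (X j.castSucc : MvPolynomial (Fin (k + 1)) (ZMod p))
        else X j.succ) (monomial d (1 : ZMod p)) = G m := aeval_mono _ d
  have key : ∀ i ∈ Finset.Icc 1 m,
      (-1 : MvPolynomial (Fin (k + 1)) (ZMod p)) ^ i *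
        aeval (fun j : Fin k =>
          if (j : ℕ) + 1 < i then (X j.castSucc : MvPolynomial (Fin (k + 1)) (ZMod p))
          else if (j : ℕ) + 1 = i then X j.castSucc + X j.succ
          else X j.succ) (monomial d (1 : ZMod p))
      = (-1) ^ i * (G i + G (i - 1)) := by
    intro i hi
    rw [Finset.mem_Icc] at hi
    congr 1
    set j0 : Fin k := ⟨i - 1, by omega⟩ with hj0def
    have hj0 : (j0 : ℕ) + 1 = i := by simp [hj0def]; omega
    obtain ⟨a, ha⟩ := hd j0
    rw [aeval_mono]
    simp only [hG]
    rw [← Finset.mul_prod_erase Finset.univ _ (Finset.mem_univ j0),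
        ← Finset.mul_prod_erase Finset.univ
          (fun j : Fin k => (if (j : ℕ) + 1 ≤ i then (X j.castSucc : MvPolynomial (Fin (k + 1)) (ZMod p)) else X j.succ) ^ d j)
          (Finset.mem_univ j0),
        ← Finset.mul_prod_erase Finset.univ
          (fun j : Fin k => (if (j : ℕ) + 1 ≤ i - 1 then (X j.castSucc : MvPolynomial (Fin (k + 1)) (ZMod p)) else X j.succ) ^ d j)
          (Finset.mem_univ j0)]
    have hne : ∀ j ∈ Finset.univ.erase j0, (j : Fin k) ≠ j0 := fun j hj =>
      Finset.ne_of_mem_erase hj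
    have e1 : ∏ j ∈ Finset.univ.erase j0,
        (if (j : ℕ) + 1 ≤ i then (X j.castSucc : MvPolynomial (Fin (k + 1)) (ZMod p)) else X j.succ) ^ d j
        = ∏ j ∈ Finset.univ.erase j0,
        (if (j : ℕ) + 1 < i then (X j.castSucc : MvPolynomial (Fin (k + 1)) (ZMod p))
          else if (j : ℕ) + 1 = i then X j.castSucc + X j.succ else X j.succ) ^ d j := by
      refine Finset.prod_congr rfl (fun j hj => ?_)
      have h1 : (j : ℕ) ≠ (j0 : ℕ) := fun h => hne j hj (Fin.ext h)
      have h2 : (j : ℕ) + 1 ≠ i := by omega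
      split_ifs <;> first | rfl | omega
    have e2 : ∏ j ∈ Finset.univ.erase j0,
        (if (j : ℕ) + 1 ≤ i - 1 then (X j.castSucc : MvPolynomial (Fin (k + 1)) (ZMod p)) else X j.succ) ^ d j
        = ∏ j ∈ Finset.univ.erase j0,
        (if (j : ℕ) + 1 < i then (X j.castSucc : MvPolynomial (Fin (k + 1)) (ZMod p))
          else if (j : ℕ) + 1 = i then X j.castSucc + X j.succ else X j.succ) ^ d j := by
      refine Finset.prod_congr rfl (fun j hj => ?_)
      have h1 : (j : ℕ) ≠ (j0 : ℕ) := fun h => hne j hj (Fin.ext h)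
      have h2 : (j : ℕ) + 1 ≠ i := by omega
      split_ifs <;> first | rfl | omega
    rw [e1, e2]
    have hb1 : (if (j0 : ℕ) + 1 < i then (X j0.castSucc : MvPolynomial (Fin (k + 1)) (ZMod p))
        else if (j0 : ℕ) + 1 = i then X j0.castSucc + X j0.succ else X j0.succ)
        = X j0.castSucc + X j0.succ := by
      split_ifs <;> first | rfl | omega
    have hb2 : (if (j0 : ℕ) + 1 ≤ i then (X j0.castSucc : MvPolynomial (Fin (k + 1)) (ZMod p))
        else X j0.succ) = X j0.castSucc := by
      split_ifs <;> first | rfl | omega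
    have hb3 : (if (j0 : ℕ) + 1 ≤ i - 1 then (X j0.castSucc : MvPolynomial (Fin (k + 1)) (ZMod p))
        else X j0.succ) = X j0.succ := by
      split_ifs <;> first | rfl | omega
    rw [hb1, hb2, hb3, ha, add_pow_char_pow, add_mul]
  rw [delta, e0, em, Finset.sum_congr rfl key]
  exact telescope_aux G m

end Aux

/-- For a power-of-`p` multi-index `λ` of length `k`, the
monomial symmetric polynomial `τλ` is an `m`-cocycle over `ℤ/pℤ`. -/
theorem statement3 (p : ℕ) (hp : p.Prime) (k m : ℕ) (hm : 1 ≤ m) (hmk : m ≤ k)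
    (lam : Fin k → ℕ) (hpow : ∀ i : Fin k, ∃ a : ℕ, lam i = p ^ a) :
    delta (ZMod p) m k (tau (ZMod p) lam) = 0 := by
  haveI : Fact p.Prime := ⟨hp⟩
  rw [tau, delta_sum]
  refine Finset.sum_eq_zero (fun d hd => ?_)
  refine delta_monomial p hp k m hmk d (fun j => ?_)
  simp only [Finset.mem_image] at hd
  obtain ⟨σ, -, rfl⟩ := hd
  simpa using hpow (σ j)
end

section
/- Let p be a prime and let λ be a multiset of positive integers with φ_p(λ) > p − 2 and α_p(λ) > 0. Then λ is not p-carry-minimal; i.e., there exists a multiset λ' of positive integers with the same sum and the same cardinality as λ such that α_p(λ') < α_p(λ). -/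
open MvPolynomial

/-! By Legendre's formula, `(p - 1) α_p(λ) = Σ σ_p(λ_i) - σ_p(Σ λ_i)`, so it suffices to find
`k = |λ|` positive integers with sum `n = Σ λ_i` and total digit sum below `Σ σ_p(λ_i)`.
Starting from the base-`p` expansion of `n` and splitting a `p ^ (b + 1)` into `p` copies of
`p ^ b` while there are fewer than `k` parts yields `U` powers of `p` summing to `n` with
`k ≤ U < max(σ_p(n), k) + p - 1`; the hypotheses `φ_p(λ) ≥ p - 1` and `α_p(λ) ≥ 1` say exactly
that this bound is at most `Σ σ_p(λ_i)`. Gathering these `U` powers into `k` parts does not raise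
the digit sum, since `σ_p` is subadditive. -/

open scoped Nat

lemma sub_one_mul_padicValNat_factorial_add_sigmaDigits {p : ℕ} [Fact p.Prime] (a : ℕ) :
    (p - 1) * padicValNat p a ! + sigmaDigits p a = a := by
  have := sub_one_mul_padicValNat_factorial (p := p) a
  have := Nat.digit_sum_le p a
  unfold sigmaDigits
  omega

theorem Multiset.prod_factorial_dvd_factorial_sum (s : Multiset ℕ) :
    (s.map Nat.factorial).prod ∣ s.sum ! := by
  induction s using Multiset.induction with
  | empty => simp
  | cons a s ih =>
    rw [Multiset.map_cons, Multiset.prod_cons, Multiset.sum_cons]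
    exact (mul_dvd_mul_left _ ih).trans (Nat.factorial_mul_factorial_dvd_factorial_add _ _)

lemma sub_one_mul_padicValNat_prod_factorial_add_sum_sigmaDigits {p : ℕ} [Fact p.Prime]
    (s : Multiset ℕ) :
    (p - 1) * padicValNat p (s.map Nat.factorial).prod + (s.map (sigmaDigits p)).sum
      = s.sum := by
  induction s using Multiset.induction with
  | empty => simp
  | cons a s ih =>
    have ha := sub_one_mul_padicValNat_factorial_add_sigmaDigits (p := p) a
    have hprod : (s.map Nat.factorial).prod ≠ 0 := by
      simp [Multiset.prod_eq_zero_iff, Nat.factorial_ne_zero]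
    simp only [Multiset.map_cons, Multiset.prod_cons, Multiset.sum_cons,
      padicValNat.mul (Nat.factorial_ne_zero a) hprod, Nat.mul_add]
    omega

theorem sub_one_mul_alphaCarry_add_sigmaDigits_sum {p : ℕ} (hp : p.Prime) (s : Multiset ℕ) :
    (p - 1) * alphaCarry p s + sigmaDigits p s.sum = (s.map (sigmaDigits p)).sum := by
  have := Fact.mk hp
  have hdvd := s.prod_factorial_dvd_factorial_sum
  have hprod : (s.map Nat.factorial).prod ≠ 0 := by
    simp [Multiset.prod_eq_zero_iff, Nat.factorial_ne_zero]
  have hsplit : padicValNat p s.sum !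
      = alphaCarry p s + padicValNat p (s.map Nat.factorial).prod := by
    rw [alphaCarry, ← padicValNat.mul (Nat.div_pos (Nat.le_of_dvd (Nat.factorial_pos _) hdvd)
      (Nat.pos_of_ne_zero hprod)).ne' hprod, Nat.div_mul_cancel hdvd]
  have h1 := sub_one_mul_padicValNat_factorial_add_sigmaDigits (p := p) s.sum
  have h2 := sub_one_mul_padicValNat_prod_factorial_add_sum_sigmaDigits (p := p) s
  rw [hsplit, Nat.mul_add] at h1
  omega

lemma sigmaDigits_pow {p : ℕ} (hp : 1 < p) (a : ℕ) : sigmaDigits p (p ^ a) = 1 := by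
  simpa [sigmaDigits, Nat.digits_of_lt p 1 one_ne_zero hp] using
    congrArg List.sum (Nat.digits_base_pow_mul (k := a) hp one_pos)

lemma sigmaDigits_sum_le {p : ℕ} (hp : p.Prime) (s : Multiset ℕ) :
    sigmaDigits p s.sum ≤ (s.map (sigmaDigits p)).sum :=
  (sub_one_mul_alphaCarry_add_sigmaDigits_sum hp s).symm ▸ Nat.le_add_left _ _

namespace IsPowOf

variable {p : ℕ} {u : Multiset ℕ}

lemma pos (hp : 1 < p) (hu : IsPowOf p u) {x : ℕ} (hx : x ∈ u) : 0 < x := by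
  obtain ⟨a, rfl⟩ := hu x hx
  positivity

lemma add (hu : IsPowOf p u) {v : Multiset ℕ} (hv : IsPowOf p v) : IsPowOf p (u + v) := by
  intro x hx
  rcases Multiset.mem_add.mp hx with h | h
  exacts [hu x h, hv x h]

lemma sum_map_sigmaDigits (hp : 1 < p) (hu : IsPowOf p u) :
    (u.map (sigmaDigits p)).sum = Multiset.card u := by
  rw [Multiset.map_congr rfl fun x hx => ?_, Multiset.map_const', Multiset.sum_replicate,
    smul_eq_mul, mul_one]
  obtain ⟨a, rfl⟩ := hu x hx
  exact sigmaDigits_pow hp a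

lemma exists_card_eq_add_of_card_lt_sum (hp : 1 < p) (hu : IsPowOf p u)
    (hcard : Multiset.card u < u.sum) :
    ∃ v, IsPowOf p v ∧ v.sum = u.sum ∧ Multiset.card v = Multiset.card u + (p - 1) := by
  obtain ⟨x, hxu, hx⟩ : ∃ x ∈ u, 1 < x := by
    by_contra! h
    simpa using (Multiset.sum_le_card_nsmul u 1 h).trans_lt' hcard
  obtain ⟨a, rfl⟩ := hu x hxu
  obtain ⟨b, rfl⟩ : ∃ b, a = b + 1 :=
    Nat.exists_eq_add_one.mpr (Nat.pos_of_ne_zero (by rintro rfl; simp at hx))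
  obtain ⟨w, rfl⟩ := Multiset.exists_cons_of_mem hxu
  refine ⟨Multiset.replicate p (p ^ b) + w, ?_, ?_, ?_⟩
  · exact add (fun y hy => ⟨b, Multiset.eq_of_mem_replicate hy⟩)
      fun y hy => hu y (Multiset.mem_cons_of_mem hy)
  · simp [pow_succ, mul_comm]
  · simp only [Multiset.card_add, Multiset.card_replicate, Multiset.card_cons]
    omega

end IsPowOf

lemma exists_isPowOf_card_eq_sigmaDigits {p : ℕ} (hp : 1 < p) (n : ℕ) :
    ∃ u, IsPowOf p u ∧ u.sum = n ∧ Multiset.card u = sigmaDigits p n := by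
  induction n using Nat.strong_induction_on with
  | _ n ih =>
    rcases Nat.eq_zero_or_pos n with rfl | hn
    · exact ⟨0, by simp [IsPowOf], rfl, by simp [sigmaDigits]⟩
    obtain ⟨u, hu, hsum, hcard⟩ := ih (n / p) (Nat.div_lt_self hn hp)
    refine ⟨Multiset.replicate (n % p) 1 + u.map (p * ·), ?_, ?_, ?_⟩
    · refine IsPowOf.add (fun x hx => ⟨0, by simpa using Multiset.eq_of_mem_replicate hx⟩) ?_
      intro x hx
      obtain ⟨y, hy, rfl⟩ := Multiset.mem_map.mp hx
      obtain ⟨a, rfl⟩ := hu y hy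
      exact ⟨a + 1, by ring⟩
    · rw [Multiset.sum_add, Multiset.sum_replicate, Multiset.sum_map_mul_left, Multiset.map_id',
        hsum, smul_eq_mul, mul_one, Nat.mod_add_div]
    · simp [sigmaDigits, Nat.digits_def' hp hn, hcard]

lemma exists_isPowOf_le_card_lt {p : ℕ} (hp : 1 < p) {n c : ℕ} (hc : c ≤ n) :
    ∃ u, IsPowOf p u ∧ u.sum = n ∧ c ≤ Multiset.card u ∧
      Multiset.card u < max (sigmaDigits p n) c + (p - 1) := by
  induction c with
  | zero =>
    obtain ⟨u, hu, hsum, hcard⟩ := exists_isPowOf_card_eq_sigmaDigits hp n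
    exact ⟨u, hu, hsum, Nat.zero_le _, by omega⟩
  | succ c ih =>
    obtain ⟨u, hu, hsum, hcu, hcard⟩ := ih (by omega)
    by_cases hlt : c < Multiset.card u
    · exact ⟨u, hu, hsum, hlt, by omega⟩
    obtain ⟨v, hv, hvsum, hvcard⟩ := hu.exists_card_eq_add_of_card_lt_sum hp (by omega)
    exact ⟨v, hv, hvsum.trans hsum, by omega, by omega⟩

lemma exists_card_eq_sum_eq_sum_sigmaDigits_le {p : ℕ} (hp : p.Prime) {k : ℕ} (hk : 0 < k)
    (u : Multiset ℕ) (hu : ∀ x ∈ u, 0 < x) (hku : k ≤ Multiset.card u) :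
    ∃ v : Multiset ℕ, (∀ x ∈ v, 0 < x) ∧ v.sum = u.sum ∧ Multiset.card v = k ∧
      (v.map (sigmaDigits p)).sum ≤ (u.map (sigmaDigits p)).sum := by
  obtain ⟨l, rfl⟩ : ∃ l : List ℕ, (l : Multiset ℕ) = u := Quot.exists_rep u
  have hl : (l : Multiset ℕ) = ↑(l.take (k - 1)) + ↑(l.drop (k - 1)) := by
    rw [Multiset.coe_add, List.take_append_drop]
  set t : Multiset ℕ := ↑(l.take (k - 1))
  set d : Multiset ℕ := ↑(l.drop (k - 1))
  have hcard : Multiset.card (l : Multiset ℕ) = Multiset.card t + Multiset.card d := by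
    rw [hl, Multiset.card_add]
  have ht : Multiset.card t = k - 1 := by
    simp only [t, Multiset.coe_card, List.length_take]
    simp only [Multiset.coe_card] at hku
    omega
  have hd : d ≠ 0 := by
    rintro hd
    simp only [hd, Multiset.card_zero] at hcard
    omega
  rw [hl] at hu ⊢
  refine ⟨d.sum ::ₘ t, ?_, ?_, ?_, ?_⟩
  · intro x hx
    rcases Multiset.mem_cons.mp hx with rfl | hx
    · obtain ⟨y, hy⟩ := Multiset.exists_mem_of_ne_zero hd
      exact (hu y (Multiset.mem_add.mpr (Or.inr hy))).trans_le (Multiset.le_sum_of_mem hy)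
    · exact hu x (Multiset.mem_add.mpr (Or.inl hx))
  · simp only [Multiset.sum_cons, Multiset.sum_add, add_comm]
  · rw [Multiset.card_cons, ht]
    omega
  · simp only [Multiset.map_cons, Multiset.sum_cons, Multiset.map_add, Multiset.sum_add]
    linarith [sigmaDigits_sum_le hp d]

/-- If `φ_p(λ) > p − 2` and `α_p(λ) > 0` then `λ` is not
`p`-carry-minimal. -/
theorem statement4 (p : ℕ) (hp : p.Prime) (lam : Multiset ℕ)
    (hpos : ∀ x ∈ lam, 0 < x) (hphi : p - 2 < phiSplit p lam)
    (halpha : 0 < alphaCarry p lam) :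
    ∃ lam' : Multiset ℕ, (∀ x ∈ lam', 0 < x) ∧ lam'.sum = lam.sum ∧
      Multiset.card lam' = Multiset.card lam ∧
      alphaCarry p lam' < alphaCarry p lam := by
  have hp1 := hp.one_lt
  have hk : 0 < Multiset.card lam :=
    Multiset.card_pos.mpr (by rintro rfl; simp [alphaCarry] at halpha)
  have hkn : Multiset.card lam ≤ lam.sum := by
    simpa using Multiset.card_nsmul_le_sum (a := 1) hpos
  obtain ⟨u, hu, husum, hku, hucard⟩ := exists_isPowOf_le_card_lt hp1 hkn
  obtain ⟨v, hvpos, hvsum, hvcard, hvσ⟩ :=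
    exists_card_eq_sum_eq_sum_sigmaDigits_le hp hk u (fun _ => hu.pos hp1) hku
  refine ⟨v, hvpos, hvsum.trans husum, hvcard, Nat.lt_of_mul_lt_mul_left (a := p - 1) ?_⟩
  have hlam := sub_one_mul_alphaCarry_add_sigmaDigits_sum hp lam
  have hv := sub_one_mul_alphaCarry_add_sigmaDigits_sum hp v
  have hpα : p - 1 ≤ (p - 1) * alphaCarry p lam := Nat.le_mul_of_pos_right _ halpha
  rw [hvsum, husum] at hv
  rw [hu.sum_map_sigmaDigits hp1] at hvσ
  unfold phiSplit at hphi
  omega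
end

section
/- Let p be a prime and let n, k be such that there exists a power-of-p multiset μ of cardinality k with sum n. Then every multiset λ of positive integers of cardinality k with sum n that is not power-of-p fails to be p-carry-minimal; i.e., there exists a multiset λ' of positive integers of cardinality k with sum n such that α_p(λ') < α_p(λ). -/
open MvPolynomial

lemma sigmaDigits_def (p n : ℕ) : sigmaDigits p n = (Nat.digits p n).sum := rfl

lemma sigma_rec {p n : ℕ} (hp : 2 ≤ p) (hn : 0 < n) :
    sigmaDigits p n = n % p + sigmaDigits p (n / p) := by
  rw [sigmaDigits_def, Nat.digits_def' (by omega : 1 < p) hn]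
  simp [sigmaDigits_def]

lemma sigma_pos {p : ℕ} (hp : 2 ≤ p) {n : ℕ} (hn : 0 < n) : 0 < sigmaDigits p n := by
  induction n using Nat.strong_induction_on with
  | _ n ih =>
    rw [sigma_rec hp hn]
    rcases Nat.eq_zero_or_pos (n % p) with h | h
    · have hpn : p ≤ n := by
        by_contra hc
        rw [Nat.mod_eq_of_lt (by omega)] at h; omega
      have hnp : 0 < n / p := Nat.div_pos hpn (by omega)
      have := ih (n / p) (Nat.div_lt_self hn (by omega)) hnp
      omega
    · omega

lemma sigma_pow {p : ℕ} (hp : 2 ≤ p) (a : ℕ) : sigmaDigits p (p ^ a) = 1 := by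
  induction a with
  | zero =>
    rw [pow_zero, sigma_rec hp one_pos, Nat.mod_eq_of_lt (by omega),
      Nat.div_eq_of_lt (by omega)]
    simp [sigmaDigits_def]
  | succ a ih =>
    rw [sigma_rec hp (pow_pos (by omega) _), pow_succ, Nat.mul_mod_left,
      Nat.mul_div_cancel _ (by omega : 0 < p), ih]

lemma sigma_one_pow {p : ℕ} (hp : 2 ≤ p) {n : ℕ} (hn : 0 < n)
    (h : sigmaDigits p n = 1) : ∃ a, n = p ^ a := by
  induction n using Nat.strong_induction_on with
  | _ n ih =>
    rw [sigma_rec hp hn] at h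
    rcases Nat.eq_zero_or_pos (n % p) with h1 | h1
    · have hpn : p ≤ n := by
        by_contra hc
        rw [Nat.mod_eq_of_lt (by omega)] at h1; omega
      have hnp : 0 < n / p := Nat.div_pos hpn (by omega)
      obtain ⟨a, ha⟩ := ih (n / p) (Nat.div_lt_self hn (by omega)) hnp (by omega)
      refine ⟨a + 1, ?_⟩
      have h2 : n = p * (n / p) := by
        have := Nat.mod_add_div n p
        omega
      rw [h2, ha, pow_succ, mul_comm]
    · have h3 : n / p = 0 := by
        by_contra hc
        have := sigma_pos hp (n := n / p) (Nat.pos_of_ne_zero hc)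
        omega
      have h4 : p * (n / p) = 0 := by rw [h3, mul_zero]
      have := Nat.mod_add_div n p
      exact ⟨0, by rw [pow_zero]; omega⟩

lemma prod_fact_dvd (s : Multiset ℕ) :
    (s.map Nat.factorial).prod ∣ s.sum.factorial := by
  induction s using Multiset.induction_on with
  | empty => simp
  | cons a t ih =>
    simp only [Multiset.map_cons, Multiset.prod_cons, Multiset.sum_cons]
    calc a.factorial * (t.map Nat.factorial).prod ∣ a.factorial * t.sum.factorial :=
          mul_dvd_mul_left _ ih
      _ ∣ (a + t.sum).factorial := Nat.factorial_mul_factorial_dvd_factorial_add a t.sum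

lemma prod_fact_pos (s : Multiset ℕ) : 0 < (s.map Nat.factorial).prod :=
  Multiset.prod_pos (by
    intro x hx
    obtain ⟨y, _, rfl⟩ := Multiset.mem_map.mp hx
    exact Nat.factorial_pos y)

lemma val_prod_fact (p : ℕ) [Fact p.Prime] (s : Multiset ℕ) :
    padicValNat p (s.map Nat.factorial).prod
      = (s.map (fun x => padicValNat p x.factorial)).sum := by
  induction s using Multiset.induction_on with
  | empty => simp
  | cons a t ih =>
    simp only [Multiset.map_cons, Multiset.prod_cons, Multiset.sum_cons]
    rw [padicValNat.mul (Nat.factorial_ne_zero a) (prod_fact_pos t).ne', ih]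

lemma legendre_sum (p : ℕ) [Fact p.Prime] (s : Multiset ℕ) :
    (p - 1) * (s.map (fun x => padicValNat p x.factorial)).sum
      + (s.map (sigmaDigits p)).sum = s.sum := by
  induction s using Multiset.induction_on with
  | empty => simp
  | cons a t ih =>
    simp only [Multiset.map_cons, Multiset.sum_cons]
    have hLa := sub_one_mul_padicValNat_factorial (p := p) a
    have hlea : (Nat.digits p a).sum ≤ a := Nat.digit_sum_le p a
    rw [mul_add, sigmaDigits_def]
    omega

lemma key_identity (p : ℕ) (hp : p.Prime) (s : Multiset ℕ) :
    (p - 1) * alphaCarry p s + sigmaDigits p s.sum = (s.map (sigmaDigits p)).sum := by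
  haveI : Fact p.Prime := ⟨hp⟩
  obtain ⟨q, hq⟩ := prod_fact_dvd s
  have hprod := prod_fact_pos s
  have hq0 : q ≠ 0 := by
    intro h; rw [h, mul_zero] at hq; exact Nat.factorial_ne_zero _ hq
  have halpha : alphaCarry p s = padicValNat p q := by
    unfold alphaCarry
    rw [hq, Nat.mul_div_cancel_left _ hprod]
  have hval : padicValNat p s.sum.factorial
      = padicValNat p (s.map Nat.factorial).prod + padicValNat p q := by
    rw [hq, padicValNat.mul hprod.ne' hq0]
  have hmul : (p - 1) * padicValNat p s.sum.factorial
      = (p - 1) * padicValNat p (s.map Nat.factorial).prod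
        + (p - 1) * padicValNat p q := by rw [hval, mul_add]
  have hA := sub_one_mul_padicValNat_factorial (p := p) s.sum
  have hle : (Nat.digits p s.sum).sum ≤ s.sum := Nat.digit_sum_le p s.sum
  have hB := legendre_sum p s
  rw [val_prod_fact] at hmul
  rw [halpha, sigmaDigits_def]
  omega


lemma sum_sigma_ge_card {p : ℕ} (hp : 2 ≤ p) (s : Multiset ℕ)
    (hpos : ∀ x ∈ s, 0 < x) : Multiset.card s ≤ (s.map (sigmaDigits p)).sum := by
  induction s using Multiset.induction_on with
  | empty => simp
  | cons a t ih =>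
    simp only [Multiset.map_cons, Multiset.sum_cons, Multiset.card_cons]
    have h1 : 0 < sigmaDigits p a := sigma_pos hp (hpos a (Multiset.mem_cons_self a t))
    have h2 := ih (fun x hx => hpos x (Multiset.mem_cons_of_mem hx))
    omega

/-- If a power-of-`p` multiset of cardinality `k` and sum `n`
exists, then any non-power-of-`p` multiset of positive integers with the same
cardinality and sum fails to be `p`-carry-minimal. -/
theorem statement5 (p : ℕ) (hp : p.Prime) (n k : ℕ)
    (hex : ∃ μ : Multiset ℕ, IsPowOf p μ ∧ Multiset.card μ = k ∧ μ.sum = n)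
    (lam : Multiset ℕ) (hpos : ∀ x ∈ lam, 0 < x) (hcard : Multiset.card lam = k)
    (hsum : lam.sum = n) (hnpow : ¬ IsPowOf p lam) :
    ∃ lam' : Multiset ℕ, (∀ x ∈ lam', 0 < x) ∧ Multiset.card lam' = k ∧
      lam'.sum = n ∧ alphaCarry p lam' < alphaCarry p lam := by
  obtain ⟨μ, hμpow, hμcard, hμsum⟩ := hex
  have hp2 := hp.two_le
  refine ⟨μ, ?_, hμcard, ?_, ?_⟩
  · intro x hx
    obtain ⟨a, rfl⟩ := hμpow x hx
    exact pow_pos (by omega) a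
  · exact hμsum
  · have kmu := key_identity p hp μ
    have klam := key_identity p hp lam
    have hμσ : (μ.map (sigmaDigits p)).sum = k := by
      have hrep : μ.map (sigmaDigits p) = Multiset.replicate (Multiset.card μ) 1 := by
        rw [Multiset.eq_replicate]
        refine ⟨by simp, ?_⟩
        intro b hb
        obtain ⟨x, hx, rfl⟩ := Multiset.mem_map.mp hb
        obtain ⟨a, rfl⟩ := hμpow x hx
        exact sigma_pow hp2 a
      rw [hrep, Multiset.sum_replicate, smul_eq_mul, mul_one, hμcard]
    -- find a non-power entry of lam
    unfold IsPowOf at hnpow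
    push_neg at hnpow
    obtain ⟨x, hx, hxnp⟩ := hnpow
    obtain ⟨rest, hrest⟩ := Multiset.exists_cons_of_mem hx
    have hxpos : 0 < x := hpos x hx
    have hx2 : 2 ≤ sigmaDigits p x := by
      have h1 := sigma_pos hp2 hxpos
      rcases Nat.lt_or_ge (sigmaDigits p x) 2 with h | h
      · have hσ1 : sigmaDigits p x = 1 := by omega
        obtain ⟨a, ha⟩ := sigma_one_pow hp2 hxpos hσ1
        exact absurd ha (hxnp a)
      · exact h
    have hrestpos : ∀ y ∈ rest, 0 < y := by
      intro y hy
      exact hpos y (by rw [hrest]; exact Multiset.mem_cons_of_mem hy)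
    have hrestcard : Multiset.card rest + 1 = k := by
      rw [← hcard, hrest, Multiset.card_cons]
    have hrestσ := sum_sigma_ge_card hp2 rest hrestpos
    have hlamσ : k + 1 ≤ (lam.map (sigmaDigits p)).sum := by
      rw [hrest, Multiset.map_cons, Multiset.sum_cons]
      omega
    rw [hμsum, ← hsum] at kmu
    by_contra hc
    push_neg at hc
    have := Nat.mul_le_mul_left (p - 1) hc
    omega
end

section
/- Let p be a prime and let λ and μ be power-of-p multisets of equal cardinality and equal sum. If there exist j, j' ≤ p − 2 and a multiset ν such that ν ∈ T^j(λ) and ν ∈ T^{j'}(μ) (i.e., ν is obtained from λ by j gathering operations and from μ by j' gathering operations), then λ = μ. Equivalently, the gatherings of two distinct power-of-p multisets of the same weight and length remain disjoint until at least p − 1 gathering operations have been applied. -/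
open MvPolynomial

private lemma card_le_sum' : ∀ s : Multiset ℕ, (∀ x ∈ s, 1 ≤ x) → Multiset.card s ≤ s.sum := by
  intro s
  induction s using Multiset.induction with
  | empty => simp
  | cons a s ih =>
    intro h
    have h1 := h a (by simp)
    have h2 := ih (fun x hx => h x (by simp [hx]))
    simp only [Multiset.card_cons, Multiset.sum_cons]
    omega

private lemma pow_unique (p : ℕ) (hp : 2 ≤ p) :
    ∀ n : ℕ, ∀ g h : Multiset ℕ, IsPowOf p g → IsPowOf p h →
      Multiset.card g < p → Multiset.card h < p → g.sum = n → h.sum = n → g = h := by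
  intro n
  induction n using Nat.strong_induction_on with
  | _ n ih =>
    intro g h hg hh hcg hch hsg hsh
    rcases Nat.eq_zero_or_pos n with hn | hn
    · subst hn
      have hz : ∀ s : Multiset ℕ, IsPowOf p s → s.sum = 0 → s = 0 := by
        intro s hs hsum
        rw [Multiset.eq_zero_iff_forall_notMem]
        intro x hx
        obtain ⟨a, ha⟩ := hs x hx
        have h0 := Multiset.sum_eq_zero_iff.mp hsum _ hx
        have : 0 < p ^ a := pow_pos (by omega) a
        omega
      rw [hz g hg hsg, hz h hh hsh]
    · classical
      have decomp : ∀ g : Multiset ℕ, IsPowOf p g → Multiset.card g < p → g.sum = n →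
          ∃ g₂ : Multiset ℕ, g = Multiset.replicate (n % p) 1 + g₂.map (· * p) ∧
            IsPowOf p g₂ ∧ Multiset.card g₂ < p ∧ g₂.sum = n / p := by
        intro g hg hcg hsg
        set c := Multiset.count 1 g with hc
        have hrep : Multiset.filter (fun x => x = 1) g = Multiset.replicate c 1 :=
          Multiset.filter_eq' g 1
        set g₁ := Multiset.filter (fun x => ¬ x = 1) g with hg₁
        have hsplit : Multiset.replicate c 1 + g₁ = g := by
          rw [← hrep]; exact Multiset.filter_add_not _ g
        have hmem₁ : ∀ x ∈ g₁, ∃ a, 1 ≤ a ∧ x = p ^ a := by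
          intro x hx
          have hx' := Multiset.mem_of_mem_filter hx
          obtain ⟨a, rfl⟩ := hg x hx'
          have hne : ¬ (p ^ a = 1) := (Multiset.mem_filter.mp hx).2
          refine ⟨a, ?_, rfl⟩
          rcases a with _ | a
          · simp at hne
          · omega
        have hback : (g₁.map (· / p)).map (· * p) = g₁ := by
          rw [Multiset.map_map]
          have hcg' : ∀ x ∈ g₁, ((fun x => x * p) ∘ fun x => x / p) x = id x := by
            intro x hx
            obtain ⟨a, ha, rfl⟩ := hmem₁ x hx
            exact Nat.div_mul_cancel (dvd_pow_self p (by omega))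
          rw [Multiset.map_congr rfl hcg', Multiset.map_id]
        have hdvd : p ∣ g₁.sum := Multiset.dvd_sum (fun x hx => by
          obtain ⟨a, ha, rfl⟩ := hmem₁ x hx
          exact dvd_pow_self p (by omega))
        obtain ⟨m, hm⟩ := hdvd
        have hclt : c < p := lt_of_le_of_lt (Multiset.count_le_card 1 g) hcg
        have hsum' : n = c + p * m := by
          have h1 := congrArg Multiset.sum hsplit
          rw [Multiset.sum_add, Multiset.sum_replicate, smul_eq_mul, mul_one, hm] at h1
          omega
        have hmod : n % p = c := by
          rw [hsum', Nat.add_mul_mod_self_left, Nat.mod_eq_of_lt hclt]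
        have hdivn : n / p = m := by
          rw [hsum', Nat.add_mul_div_left _ _ (by omega : 0 < p), Nat.div_eq_of_lt hclt, Nat.zero_add]
        have hsumg2 : (g₁.map (· / p)).sum * p = g₁.sum := by
          conv_rhs => rw [← hback]
          rw [show ((· * p) : ℕ → ℕ) = fun i => i * p from rfl, Multiset.sum_map_mul_right,
            Multiset.map_id']
        refine ⟨g₁.map (· / p), ?_, ?_, ?_, ?_⟩
        · rw [hmod, hback, hsplit]
        · intro x hx
          obtain ⟨y, hy, rfl⟩ := Multiset.mem_map.mp hx
          obtain ⟨a, ha, rfl⟩ := hmem₁ y hy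
          refine ⟨a - 1, ?_⟩
          have hpa : p ^ a = p ^ (a - 1) * p := by
            rw [← pow_succ]
            congr 1
            omega
          rw [hpa, Nat.mul_div_cancel _ (by omega : 0 < p)]
        · rw [Multiset.card_map]
          exact lt_of_le_of_lt (Multiset.card_le_card (Multiset.filter_le _ g)) hcg
        · rw [hdivn]
          refine Nat.eq_of_mul_eq_mul_right (show 0 < p by omega) ?_
          rw [hsumg2, hm, Nat.mul_comm]
      obtain ⟨g₂, hgeq, hg₂, hcg₂, hsg₂⟩ := decomp g hg hcg hsg
      obtain ⟨h₂, hheq, hh₂, hch₂, hsh₂⟩ := decomp h hh hch hsh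
      have heq : g₂ = h₂ :=
        ih (n / p) (Nat.div_lt_self hn (by omega)) g₂ h₂ hg₂ hh₂ hcg₂ hch₂ hsg₂ hsh₂
      rw [hgeq, hheq, heq]

private lemma map_sum_inj (p : ℕ) (hp : 2 ≤ p) :
    ∀ P Q : Multiset (Multiset ℕ),
      (∀ g ∈ P, IsPowOf p g ∧ Multiset.card g < p) →
      (∀ g ∈ Q, IsPowOf p g ∧ Multiset.card g < p) →
      P.map Multiset.sum = Q.map Multiset.sum → P = Q := by
  intro P
  induction P using Multiset.induction with
  | empty =>
    intro Q _ _ h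
    have : Q.map Multiset.sum = 0 := by simpa using h.symm
    rw [Multiset.map_eq_zero] at this
    rw [this]
  | cons g P ihP =>
    intro Q hPh hQh h
    have hg : g.sum ∈ Q.map Multiset.sum := by rw [← h]; simp
    obtain ⟨g', hg'Q, hg'⟩ := Multiset.mem_map.mp hg
    have hgg : g' = g :=
      pow_unique p hp g.sum g' g (hQh g' hg'Q).1 (hPh g (by simp)).1
        (hQh g' hg'Q).2 (hPh g (by simp)).2 hg' rfl
    rw [hgg] at hg'Q
    have hQe : Q = g ::ₘ Q.erase g := (Multiset.cons_erase hg'Q).symm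
    rw [hQe, Multiset.map_cons, Multiset.map_cons] at h
    have htail := (Multiset.cons_inj_right _).mp h
    have hPQ : P = Q.erase g := by
      refine ihP (Q.erase g) (fun g₀ hg₀ => hPh g₀ (by simp [hg₀])) ?_ htail
      intro g₀ hg₀
      exact hQh g₀ (Multiset.mem_of_mem_erase hg₀)
    rw [hQe, hPQ]

private lemma gather_struct :
    ∀ (j : ℕ) (s ν : Multiset ℕ), ν ∈ gatherSet j s →
      ∃ P : Multiset (Multiset ℕ), (∀ g ∈ P, g ≠ 0) ∧ P.map Multiset.sum = ν ∧
        P.join = s ∧ Multiset.card P + j = Multiset.card s := by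
  intro j
  induction j with
  | zero =>
    intro s ν hν
    simp only [gatherSet, Set.mem_singleton_iff] at hν
    subst hν
    refine ⟨ν.map (fun x => ({x} : Multiset ℕ)), ?_, ?_, ?_, ?_⟩
    · intro g hg
      obtain ⟨x, _, rfl⟩ := Multiset.mem_map.mp hg
      simp
    · rw [Multiset.map_map]
      simp [Function.comp_def]
    · simpa [Multiset.join] using Multiset.sum_map_singleton ν
    · simp
  | succ j ihj =>
    intro s ν hν
    simp only [gatherSet, Set.mem_setOf_eq] at hν
    obtain ⟨u, hu, a, b, w, huw, hνw⟩ := hν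
    obtain ⟨P, hP0, hPs, hPj, hPc⟩ := ihj s u hu
    rw [huw] at hPs
    have ha : a ∈ P.map Multiset.sum := by rw [hPs]; simp
    obtain ⟨A, hAP, hA⟩ := Multiset.mem_map.mp ha
    have hP1 : P = A ::ₘ P.erase A := (Multiset.cons_erase hAP).symm
    have h2 : (P.erase A).map Multiset.sum = b ::ₘ w := by
      have h' := hPs
      rw [hP1, Multiset.map_cons, hA] at h'
      exact (Multiset.cons_inj_right _).mp h'
    have hb : b ∈ (P.erase A).map Multiset.sum := by rw [h2]; simp
    obtain ⟨B, hBP, hB⟩ := Multiset.mem_map.mp hb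
    have hP2 : P.erase A = B ::ₘ (P.erase A).erase B := (Multiset.cons_erase hBP).symm
    have h3 : ((P.erase A).erase B).map Multiset.sum = w := by
      have h' := h2
      rw [hP2, Multiset.map_cons, hB] at h'
      exact (Multiset.cons_inj_right _).mp h'
    refine ⟨(A + B) ::ₘ (P.erase A).erase B, ?_, ?_, ?_, ?_⟩
    · intro g hg
      rcases Multiset.mem_cons.mp hg with rfl | hg'
      · intro hc
        exact hP0 A hAP (Multiset.le_zero.mp (hc ▸ le_self_add))
      · exact hP0 g (Multiset.mem_of_mem_erase (Multiset.mem_of_mem_erase hg'))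
    · rw [hνw, Multiset.map_cons, h3, Multiset.sum_add, hA, hB]
    · rw [Multiset.join_cons, ← hPj]
      conv_rhs => rw [hP1, hP2]
      rw [Multiset.join_cons, Multiset.join_cons, add_assoc]
    · have c1 := Multiset.card_erase_of_mem hAP
      have c2 := Multiset.card_erase_of_mem hBP
      simp only [Nat.pred_eq_sub_one] at c1 c2
      have p1 : 0 < Multiset.card P := Multiset.card_pos.mpr (by rintro rfl; simp at hAP)
      have p2 : 0 < Multiset.card (P.erase A) := Multiset.card_pos.mpr (fun h0 => by rw [h0] at hBP; simp at hBP)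
      simp only [Multiset.card_cons]
      omega


/-- Gatherings of two power-of-`p` multisets of equal weight and
length stay disjoint through `p − 2` gathering operations: if some `ν` is a
`j`-fold gathering of `λ` and a `j'`-fold gathering of `μ` with `j, j' ≤ p − 2`,
then `λ = μ`. -/
theorem statement8 (p : ℕ) (hp : p.Prime) (lam μ : Multiset ℕ)
    (hlam : IsPowOf p lam) (hμ : IsPowOf p μ)
    (hcard : Multiset.card lam = Multiset.card μ) (hsum : lam.sum = μ.sum)
    (j j' : ℕ) (hj : j ≤ p - 2) (hj' : j' ≤ p - 2)
    (ν : Multiset ℕ) (hν : ν ∈ gatherSet j lam) (hν' : ν ∈ gatherSet j' μ) :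
    lam = μ := by
  have hp2 : 2 ≤ p := hp.two_le
  obtain ⟨P, hP0, hPν, hPj, hPc⟩ := gather_struct j lam ν hν
  obtain ⟨Q, hQ0, hQν, hQj, hQc⟩ := gather_struct j' μ ν hν'
  have hgood : ∀ (j₀ : ℕ) (s : Multiset ℕ) (R : Multiset (Multiset ℕ)),
      IsPowOf p s → j₀ ≤ p - 2 → (∀ g ∈ R, g ≠ 0) → R.join = s →
      Multiset.card R + j₀ = Multiset.card s →
      ∀ g ∈ R, IsPowOf p g ∧ Multiset.card g < p := by
    intro j₀ s R hs hj₀ hR0 hRj hRc g hg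
    constructor
    · intro x hx
      exact hs x (by rw [← hRj]; exact Multiset.mem_join.mpr ⟨g, hg, hx⟩)
    · have hcards : Multiset.card s = (R.map Multiset.card).sum := by
        rw [← hRj, Multiset.card_join]
      have hR1 : R = g ::ₘ R.erase g := (Multiset.cons_erase hg).symm
      have hsum2 : (R.map Multiset.card).sum
          = Multiset.card g + ((R.erase g).map Multiset.card).sum := by
        conv_lhs => rw [hR1]
        rw [Multiset.map_cons, Multiset.sum_cons]
      have hge : Multiset.card (R.erase g) ≤ ((R.erase g).map Multiset.card).sum := by
        have h' := card_le_sum' ((R.erase g).map Multiset.card) ?_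
        · simpa using h'
        · intro x hx
          obtain ⟨g', hg', rfl⟩ := Multiset.mem_map.mp hx
          exact Multiset.card_pos.mpr (hR0 g' (Multiset.mem_of_mem_erase hg'))
      have c1 := Multiset.card_erase_of_mem hg
      simp only [Nat.pred_eq_sub_one] at c1
      have p1 : 0 < Multiset.card R := Multiset.card_pos.mpr (by rintro rfl; simp at hg)
      omega
  have hPQ : P = Q :=
    map_sum_inj p hp2 P Q (hgood j lam P hlam hj hP0 hPj hPc)
      (hgood j' μ Q hμ hj' hQ0 hQj hQc) (hPν.trans hQν.symm)
  rw [← hPj, ← hQj, hPQ]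
end

section
/- Let p be a prime and let f ∈ Z_p[x_1,…,x_k] be a symmetric polynomial with δ_2(f) = 0. Let λ be a multiset of positive integers of cardinality k such that the coefficient in f of the monomials with exponent multiset λ is nonzero (i.e., τλ participates in f). Then for every μ ∈ ann_p(λ), the coefficient in f of the monomials with exponent multiset μ is also nonzero. -/
open MvPolynomial

/-!
Read off the coefficient of `x₀^a x₁^b x₂^y x^w` in `δ₂ f = 0`. The outer faces `f(x₁, …)` and
`f(x₀, x₁, x₃, …)` miss `x₀` resp. `x₂`, so only the two middle faces contribute, and expanding
`(x₀ + x₁)^(a+b)` and `(x₁ + x₂)^(b+y)` gives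
`C(a+b, a) · c(a+b, y, w) = C(b+y, b) · c(a, b+y, w)`.
If `a + b` has no carries in base `p`, Kummer's theorem makes `C(a+b, a)` a unit mod `p`, so a
nonzero coefficient on `{a+b, y, …}` forces one on `{a, b+y, …}`. For symmetric `f` the
coefficient depends only on the exponent multiset, and induction along `ann_p(λ)` concludes.
-/

open Finsupp (single)

lemma multisetOf_cons {k : ℕ} (a : ℕ) (v : Fin k → ℕ) :
    multisetOf (Fin.cons a v) = a ::ₘ multisetOf v := by
  simp [multisetOf, Fin.univ_val_map, List.ofFn_succ]

lemma exMult_cons {k : ℕ} (a : ℕ) (d : Fin k →₀ ℕ) :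
    exMult (Finsupp.cons a d) = a ::ₘ exMult d :=
  multisetOf_cons a d

lemma card_exMult {k : ℕ} (d : Fin k →₀ ℕ) : Multiset.card (exMult d) = k := by
  simp [exMult, multisetOf]

lemma exists_exMult_eq {k : ℕ} (s : Multiset ℕ) (h : Multiset.card s = k) :
    ∃ d : Fin k →₀ ℕ, exMult d = s := by
  obtain ⟨l, rfl⟩ := Quot.exists_rep s
  obtain rfl : l.length = k := h
  exact ⟨Finsupp.equivFunOnFinite.symm l.get, by simp [exMult, multisetOf, Fin.univ_val_map]⟩

lemma exists_perm_of_multisetOf_eq {k : ℕ} {v w : Fin k → ℕ}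
    (h : multisetOf v = multisetOf w) : ∃ σ : Equiv.Perm (Fin k), w = v ∘ σ := by
  have hfiber (c : ℕ) : Fintype.card {i // w i = c} = Fintype.card {i // v i = c} := by
    have := congrArg (Multiset.count c) h
    simp only [multisetOf, Multiset.count_map, Fintype.card_subtype] at this ⊢
    simpa [Finset.card, Finset.filter_val, eq_comm] using this.symm
  exact ⟨Equiv.ofFiberEquiv fun c => Fintype.equivOfCardEq (hfiber c),
    funext fun i => (Equiv.ofFiberEquiv_map _ i).symm⟩

lemma coeff_eq_of_exMult_eq {R : Type*} [CommSemiring R] {k : ℕ}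
    {f : MvPolynomial (Fin k) R} (hsym : f.IsSymmetric) {d d' : Fin k →₀ ℕ}
    (h : exMult d = exMult d') : coeff d f = coeff d' f := by
  obtain ⟨σ, hσ⟩ := exists_perm_of_multisetOf_eq h
  have hd' : d' = Finsupp.mapDomain σ.symm d := by
    ext j
    simp [Finsupp.mapDomain_equiv_apply, hσ]
  rw [hd', ← hsym σ.symm, coeff_rename_mapDomain _ σ.symm.injective, hsym]

namespace Finsupp

lemma add_single_eq_add_single_iff {σ M : Type*} [AddCancelCommMonoid M] {t : σ}
    {u v : σ →₀ M} (hu : u t = 0) (hv : v t = 0) {c c' : M} :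
    u + single t c = v + single t c' ↔ u = v ∧ c = c' := by
  refine ⟨fun h => ?_, fun ⟨huv, hc⟩ => huv ▸ hc ▸ rfl⟩
  have hc : c = c' := by simpa [hu, hv] using DFunLike.congr_fun h t
  exact ⟨add_right_cancel (hc ▸ h), hc⟩

variable {n : ℕ} {M : Type*} [AddCommMonoid M]

lemma cons_add_cons (c c' : M) (e e' : Fin n →₀ M) :
    cons c e + cons c' e' = cons (c + c') (e + e') := by
  ext j
  cases j using Fin.cases <;> simp

lemma single_succ_eq_cons_zero (i : Fin n) (c : M) : single i.succ c = cons 0 (single i c) :=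
  (cons_zero_single_eq_single_succ i c).symm

lemma mapDomain_succ_eq_cons_zero (e : Fin n →₀ M) : e.mapDomain Fin.succ = cons 0 e := by
  ext j
  cases j using Fin.cases
  · simp [mapDomain_of_notMem_range]
  · simp [mapDomain_apply (Fin.succ_injective _)]

lemma mapDomain_succAbove_one_cons (c : M) (e : Fin n →₀ M) :
    (cons c e).mapDomain (Fin.succAbove 1) = cons c (cons 0 e) := by
  have hcomp : Fin.succAbove 1 ∘ Fin.succ = Fin.succ ∘ (Fin.succ : Fin n → Fin (n + 1)) := by
    funext j
    simp [Fin.succAbove, Fin.lt_def]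
  have hc : cons c e = e.mapDomain Fin.succ + single 0 c := by
    rw [mapDomain_succ_eq_cons_zero, ← cons_zero_eq_single_zero, cons_add_cons, zero_add,
      add_zero]
  rw [hc, mapDomain_add, ← mapDomain_comp, hcomp, mapDomain_comp, mapDomain_single,
    mapDomain_succ_eq_cons_zero, mapDomain_succ_eq_cons_zero,
    Fin.succAbove_ne_zero_zero one_ne_zero, ← cons_zero_eq_single_zero, cons_add_cons, zero_add,
    add_zero]

end Finsupp

namespace MvPolynomial

variable {R σ τ : Type*} [CommSemiring R]

lemma coeff_rename_eq_zero_of_apply_ne_zero {i : σ → τ} {s : τ} (hs : s ∉ Set.range i)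
    (g : MvPolynomial σ R) {E : τ →₀ ℕ} (hE : E s ≠ 0) : coeff E (rename i g) = 0 :=
  coeff_rename_eq_zero i g E fun u hu => absurd (hu ▸ Finsupp.mapDomain_of_notMem_range u s hs) hE

variable [DecidableEq σ]

lemma aeval_update_monomial_of_apply_eq_zero {t : σ} (q : MvPolynomial σ R) {u : σ →₀ ℕ}
    (hu : u t = 0) (c : R) : aeval (Function.update X t q) (monomial u c) = monomial u c := by
  rw [aeval_monomial, monomial_eq, algebraMap_eq]
  congr 1
  refine Finsupp.prod_congr fun i hi => ?_
  rw [Function.update_of_ne (by rintro rfl; exact Finsupp.mem_support_iff.mp hi hu)]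

open Finset.HasAntidiagonal in
lemma coeff_aeval_update_X_add_X_monomial {s t : σ} (hst : s ≠ t) {m : σ →₀ ℕ} (hm : m s = 0)
    (c : R) {v : σ →₀ ℕ} (hvs : v s = 0) (hvt : v t = 0) (n r : ℕ) :
    coeff (v + single s n + single t r)
        (aeval (Function.update X t (X s + X t)) (monomial m c)) =
      (n + r).choose n * coeff (v + single t (n + r)) (monomial m c) := by
  set u := m.erase t
  have hut : u t = 0 := Finsupp.erase_same
  have hus : u s = 0 := by rw [Finsupp.erase_ne hst, hm]
  have hexpand : aeval (Function.update X t (X s + X t)) (monomial m c) =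
      ∑ x ∈ antidiagonal (m t),
        monomial (u + single s x.1 + single t x.2) ((m t).choose x.1 * c) := by
    have hm' : monomial m c = monomial u c * X t ^ (m t) := by
      rw [X_pow_eq_monomial, monomial_mul, mul_one, Finsupp.erase_add_single]
    rw [hm', map_mul, aeval_update_monomial_of_apply_eq_zero _ hut, map_pow, aeval_X,
      Function.update_self, (Commute.all _ _).add_pow', Finset.mul_sum]
    refine Finset.sum_congr rfl fun x _ => ?_
    rw [X_pow_eq_monomial, X_pow_eq_monomial, monomial_mul, mul_smul_comm, monomial_mul,
      smul_monomial, ← add_assoc, mul_one, mul_one, nsmul_eq_mul]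
  have hvst : (v + single s n) t = 0 := by simp [hvt, hst]
  have hust (i : ℕ) : (u + single s i) t = 0 := by simp [hut, hst]
  have hmv : m = v + single t (n + r) ↔ u = v ∧ m t = n + r := by
    conv_lhs => rw [← Finsupp.erase_add_single t m]
    exact Finsupp.add_single_eq_add_single_iff hut hvt
  have hpair (x : ℕ × ℕ) : (x.1 = n ∧ x.2 = r) ↔ x = (n, r) := by rw [Prod.ext_iff]
  rw [hexpand, coeff_sum]
  simp only [coeff_monomial, hmv, and_assoc,
    Finsupp.add_single_eq_add_single_iff (hust _) hvst,
    Finsupp.add_single_eq_add_single_iff hus hvs]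
  by_cases huv : u = v
  · simp only [huv, true_and, hpair, Finset.sum_ite_eq', mem_antidiagonal, eq_comm (a := n + r)]
    split_ifs with h
    · rw [h]
    · rw [mul_zero]
  · simp only [huv, false_and, if_false, Finset.sum_const_zero, mul_zero]

lemma coeff_aeval_update_X_add_X {s t : σ} (hst : s ≠ t) {h : MvPolynomial σ R}
    (hh : ∀ m ∈ h.support, m s = 0) {v : σ →₀ ℕ} (hvs : v s = 0) (hvt : v t = 0) (n r : ℕ) :
    coeff (v + single s n + single t r) (aeval (Function.update X t (X s + X t)) h) =
      (n + r).choose n * coeff (v + single t (n + r)) h := by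
  conv_lhs => rw [h.as_sum]
  conv_rhs => rw [h.as_sum]
  simp only [map_sum, coeff_sum, Finset.mul_sum]
  exact Finset.sum_congr rfl fun m hm =>
    coeff_aeval_update_X_add_X_monomial hst (hh m hm) _ hvs hvt n r

variable [DecidableEq τ]

lemma coeff_aeval_update_comp_X_add_X {i : σ → τ} (hi : Function.Injective i) {s t : τ}
    (hs : s ∉ Set.range i) {j : σ} (ht : i j = t) (g : MvPolynomial σ R) {e : σ →₀ ℕ}
    (he : e j = 0) (n r : ℕ) :
    coeff (e.mapDomain i + single s n + single t r)
        (aeval (Function.update (X ∘ i) j (X s + X t)) g) =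
      (n + r).choose n * coeff (e + single j (n + r)) g := by
  subst ht
  have hsupp (m) (hm : m ∈ (rename i g).support) : m s = 0 := by
    obtain ⟨u, rfl, -⟩ := coeff_rename_ne_zero i g m (mem_support_iff.mp hm)
    exact Finsupp.mapDomain_of_notMem_range u s hs
  rw [← Function.update_comp_eq_of_injective _ hi, ← aeval_rename,
    coeff_aeval_update_X_add_X (fun h => hs ⟨j, h.symm⟩) hsupp
      (Finsupp.mapDomain_of_notMem_range _ _ hs) (by rw [Finsupp.mapDomain_apply hi, he]),
    ← Finsupp.mapDomain_single, ← Finsupp.mapDomain_add, coeff_rename_mapDomain _ hi]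

end MvPolynomial

lemma delta_two_eq {A : Type*} [CommRing A] {k : ℕ} (f : MvPolynomial (Fin (k + 2)) A) :
    delta A 2 (k + 2) f =
      rename Fin.succ f - aeval (Function.update (X ∘ Fin.succ) 0 (X 0 + X 1)) f
        + aeval (Function.update (X ∘ Fin.succAbove 1) 1 (X 1 + X 2)) f
        - rename (Fin.succAbove 2) f := by
  have h₁ (j : Fin (k + 2)) :
      (if (j : ℕ) + 1 < 1 then (X j.castSucc : MvPolynomial (Fin (k + 3)) A)
        else if (j : ℕ) + 1 = 1 then X j.castSucc + X j.succ else X j.succ) =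
      Function.update (X ∘ Fin.succ) 0 (X 0 + X 1) j := by
    cases j using Fin.cases <;> simp
  have h₂ (j : Fin (k + 2)) :
      (if (j : ℕ) + 1 < 2 then (X j.castSucc : MvPolynomial (Fin (k + 3)) A)
        else if (j : ℕ) + 1 = 2 then X j.castSucc + X j.succ else X j.succ) =
      Function.update (X ∘ Fin.succAbove 1) 1 (X 1 + X 2) j := by
    rcases j with ⟨_ | _ | j, _⟩
    · simp [Function.update_of_ne, Fin.succAbove]
    · simp
    · simp [Function.update_of_ne, Fin.succAbove, Fin.lt_def]
  have h₃ (j : Fin (k + 2)) :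
      (if (j : ℕ) + 1 ≤ 2 then (X j.castSucc : MvPolynomial (Fin (k + 3)) A) else X j.succ) =
        X (Fin.succAbove 2 j) := by
    unfold Fin.succAbove
    split_ifs <;> simp_all [Fin.lt_def, Nat.mod_eq_of_lt (show 2 < k + 2 + 1 by omega)]
    omega
  rw [delta, show Finset.Icc 1 2 = {1, 2} from rfl, Finset.sum_pair (by norm_num)]
  simp only [h₁, h₂, h₃, rename_eq_aeval, Function.comp_def]
  ring

theorem choose_mul_coeff_eq_of_delta_two_eq_zero {A : Type*} [CommRing A] {k : ℕ}
    {f : MvPolynomial (Fin (k + 2)) A} (hf : delta A 2 (k + 2) f = 0) {a y : ℕ} (ha : a ≠ 0)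
    (hy : y ≠ 0) (b : ℕ) (w : Fin k →₀ ℕ) :
    ((a + b).choose a : A) * coeff (.cons (a + b) (.cons y w)) f =
      ((b + y).choose b : A) * coeff (.cons a (.cons (b + y) w)) f := by
  set E : Fin (k + 3) →₀ ℕ := .cons a (.cons b (.cons y w)) with hE
  have hE₁ : E = (Finsupp.cons 0 (.cons y w)).mapDomain Fin.succ + single 0 a + single 1 b := by
    rw [hE, ← Fin.succ_zero_eq_one]
    simp only [Finsupp.mapDomain_succ_eq_cons_zero, Finsupp.single_succ_eq_cons_zero,
      ← Finsupp.cons_zero_eq_single_zero, Finsupp.cons_add_cons, add_zero, zero_add]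
  have hE₂ : E = (Finsupp.cons a (.cons 0 w)).mapDomain (Fin.succAbove 1) + single 1 b +
      single 2 y := by
    rw [hE, Finsupp.mapDomain_succAbove_one_cons, ← Fin.succ_zero_eq_one, ← Fin.succ_one_eq_two,
      ← Fin.succ_zero_eq_one]
    simp only [Finsupp.single_succ_eq_cons_zero, ← Finsupp.cons_zero_eq_single_zero,
      Finsupp.cons_add_cons, add_zero, zero_add]
  have hface₀ : coeff E (rename Fin.succ f) = 0 :=
    coeff_rename_eq_zero_of_apply_ne_zero (s := 0) (by simp [Fin.range_succ]) f
      (by simpa [E] using ha)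
  have hface₃ : coeff E (rename (Fin.succAbove 2) f) = 0 :=
    coeff_rename_eq_zero_of_apply_ne_zero (s := 2) (by simp [Fin.range_succAbove]) f
      (by change E (Fin.succ (Fin.succ 0)) ≠ 0
          rwa [hE, Finsupp.cons_succ, Finsupp.cons_succ, Finsupp.cons_zero])
  have hface₁ : coeff E (aeval (Function.update (X ∘ Fin.succ) 0 (X 0 + X 1)) f) =
      (a + b).choose a * coeff (.cons (a + b) (.cons y w)) f := by
    rw [hE₁, coeff_aeval_update_comp_X_add_X (Fin.succ_injective _) (s := 0)
      (by simp [Fin.range_succ]) Fin.succ_zero_eq_one f (by simp)]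
    simp only [← Finsupp.cons_zero_eq_single_zero, Finsupp.cons_add_cons, add_zero, zero_add]
  have hface₂ : coeff E (aeval (Function.update (X ∘ Fin.succAbove 1) 1 (X 1 + X 2)) f) =
      (b + y).choose b * coeff (.cons a (.cons (b + y) w)) f := by
    rw [hE₂, coeff_aeval_update_comp_X_add_X Fin.succAbove_right_injective (s := 1)
      (by simp [Fin.range_succAbove]) (j := 1) (by simp) f
      (by rw [← Fin.succ_zero_eq_one, Finsupp.cons_succ, Finsupp.cons_zero]),
      ← Fin.succ_zero_eq_one]
    simp only [Finsupp.single_succ_eq_cons_zero, ← Finsupp.cons_zero_eq_single_zero,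
      Finsupp.cons_add_cons, add_zero, zero_add]
  have h := congrArg (coeff E) hf
  rw [delta_two_eq, coeff_sub, coeff_add, coeff_sub, coeff_zero, hface₀, hface₁, hface₂,
    hface₃] at h
  linear_combination -h

lemma natCast_choose_ne_zero_of_sigmaDigits_add {p : ℕ} [hp : Fact p.Prime] {a b : ℕ}
    (h : sigmaDigits p a + sigmaDigits p b = sigmaDigits p (a + b)) :
    ((a + b).choose a : ZMod p) ≠ 0 := by
  have hkummer := sub_one_mul_padicValNat_choose_eq_sub_sum_digits' (p := p) (k := a) (n := b)
  rw [add_comm b a, ← sigmaDigits, ← sigmaDigits, ← sigmaDigits, h, Nat.sub_self, mul_eq_zero,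
    or_iff_right (Nat.sub_ne_zero_of_lt hp.out.one_lt), padicValNat.eq_zero_iff] at hkummer
  rw [Ne, ZMod.natCast_eq_zero_iff]
  rcases hkummer with hp1 | hchoose | hndvd
  · exact absurd hp1 hp.out.ne_one
  · exact absurd hchoose (Nat.choose_pos (Nat.le_add_right a b)).ne'
  · exact hndvd

lemma AnnStep.forall_pos {p : ℕ} {μ ν : Multiset ℕ} (h : AnnStep p μ ν)
    (hμ : ∀ x ∈ μ, 0 < x) : ∀ x ∈ ν, 0 < x := by
  obtain ⟨x, y, a, b, u, rfl, ha, -, -, -, rfl⟩ := h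
  simp only [Multiset.mem_cons, forall_eq_or_imp] at hμ ⊢
  exact ⟨ha, Nat.add_pos_right b hμ.2.1, hμ.2.2⟩

lemma forall_pos_of_mem_annSet {p : ℕ} {lam μ : Multiset ℕ} (hlam : ∀ x ∈ lam, 0 < x)
    (hμ : μ ∈ annSet p lam) : ∀ x ∈ μ, 0 < x := by
  induction hμ with
  | refl => exact hlam
  | tail _ hstep ih => exact hstep.forall_pos ih

lemma coeff_ne_zero_of_annStep {p k : ℕ} [Fact p.Prime] {f : MvPolynomial (Fin k) (ZMod p)}
    (hsym : f.IsSymmetric) (hcoc : delta (ZMod p) 2 k f = 0) {μ ν : Multiset ℕ}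
    (hstep : AnnStep p μ ν) (hpos : ∀ x ∈ μ, 0 < x)
    (hμ : ∀ d : Fin k →₀ ℕ, exMult d = μ → coeff d f ≠ 0) :
    ∀ d : Fin k →₀ ℕ, exMult d = ν → coeff d f ≠ 0 := by
  obtain ⟨x, y, a, b, u, rfl, ha, -, rfl, hdig, rfl⟩ := hstep
  intro d hd
  obtain rfl : k = Multiset.card u + 2 := by simpa [card_exMult] using congrArg Multiset.card hd
  obtain ⟨w, hw⟩ := exists_exMult_eq u rfl
  have hy : y ≠ 0 := (hpos y (by simp)).ne'
  have key := choose_mul_coeff_eq_of_delta_two_eq_zero hcoc ha.ne' hy b w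
  have he : coeff (.cons (a + b) (.cons y w)) f ≠ 0 :=
    hμ _ (by rw [exMult_cons, exMult_cons, hw])
  rw [coeff_eq_of_exMult_eq hsym (d' := .cons a (.cons (b + y) w))
    (by rw [hd, exMult_cons, exMult_cons, hw])]
  intro h0
  rw [h0, mul_zero] at key
  exact mul_ne_zero (natCast_choose_ne_zero_of_sigmaDigits_add hdig) he key

theorem statement12_general (p : ℕ) (hp : p.Prime) (k : ℕ)
    (f : MvPolynomial (Fin k) (ZMod p)) (hsym : f.IsSymmetric)
    (hcoc : delta (ZMod p) 2 k f = 0)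
    (lam : Multiset ℕ) (hpos : ∀ x ∈ lam, 0 < x)
    (hne : ∃ d : Fin k →₀ ℕ, exMult d = lam ∧ MvPolynomial.coeff d f ≠ 0)
    (μ : Multiset ℕ) (hμ : μ ∈ annSet p lam) :
    ∀ d : Fin k →₀ ℕ, exMult d = μ → MvPolynomial.coeff d f ≠ 0 := by
  have := Fact.mk hp
  induction hμ with
  | refl =>
    obtain ⟨d₀, hd₀, hcoeff⟩ := hne
    exact fun d hd => coeff_eq_of_exMult_eq hsym (hd.trans hd₀.symm) ▸ hcoeff
  | tail hreach hstep ih =>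
    exact coeff_ne_zero_of_annStep hsym hcoc hstep (forall_pos_of_mem_annSet hpos hreach) ih

/-- If a symmetric `2`-cocycle `f` over `ℤ/pℤ` has a nonzero
coefficient on the monomials with exponent multiset `λ`, then it has nonzero
coefficients on the monomials with exponent multiset `μ` for every
`μ ∈ ann_p(λ)`. -/
theorem statement12 (p : ℕ) (hp : p.Prime) (k : ℕ) (hk : 2 ≤ k)
    (f : MvPolynomial (Fin k) (ZMod p)) (hsym : f.IsSymmetric)
    (hcoc : delta (ZMod p) 2 k f = 0)
    (lam : Multiset ℕ) (hpos : ∀ x ∈ lam, 0 < x) (hcard : Multiset.card lam = k)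
    (hne : ∃ d : Fin k →₀ ℕ, exMult d = lam ∧ MvPolynomial.coeff d f ≠ 0)
    (μ : Multiset ℕ) (hμ : μ ∈ annSet p lam) :
    ∀ d : Fin k →₀ ℕ, exMult d = μ → MvPolynomial.coeff d f ≠ 0 :=
  statement12_general p hp k f hsym hcoc lam hpos hne μ hμ
end

section
/- Let p be a prime, let 1 ≤ m ≤ k, and let λ be a multi-index of length k with all entries positive. If the monomial x^ν = x_0^{ν_0}x_1^{ν_1}⋯x_k^{ν_k} occurs with nonzero coefficient in δ_m(τλ) ∈ Z_p[x_0,x_1,…,x_k], then α_p(ν) = α_p(λ). -/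
/-!
Each of the `m + 2` terms of `δ_m(τλ)` is `τλ` under a substitution of variables: either an
injective renaming, which only inserts a zero exponent, or a renaming followed by
`x_a ↦ x_a + x_b`, which splits an exponent `n` of a monomial of `τλ` as `t + (n - t)` with
coefficient `C(n, t)`. Over `ℤ/pℤ` that coefficient survives only when `p ∤ C(n, t)`, and since
`α_p` is the `p`-adic valuation of the multinomial coefficient and
`multinomial (t, n - t, …) = C(n, t) · multinomial (n, …)`, such a split leaves `α_p` unchanged.
-/

open MvPolynomial

namespace Multiset

theorem prod_map_factorial_mul_multinomial (s : Multiset ℕ) :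
    (s.map Nat.factorial).prod * s.multinomial = s.sum.factorial := by
  induction s using Multiset.induction_on with
  | empty => simp
  | cons a s ih =>
    rw [map_cons, prod_cons, multinomial_cons, sum_cons,
      ← Nat.add_choose_mul_factorial_mul_factorial a s.sum, ← ih, Nat.choose_symm_add]
    ring

theorem multinomial_cons_zero (s : Multiset ℕ) : (0 ::ₘ s).multinomial = s.multinomial := by
  simp [multinomial_cons]

theorem multinomial_cons_cons (a b : ℕ) (s : Multiset ℕ) :
    (a ::ₘ b ::ₘ s).multinomial = (a + b).choose a * ((a + b) ::ₘ s).multinomial := by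
  rw [show a ::ₘ b ::ₘ s = {a, b} + s by simp, multinomial_add, insert_eq_cons,
    multinomial_cons, multinomial_singleton, multinomial_cons]
  simp only [sum_add, sum_cons, sum_singleton, mul_one]
  ring

end Multiset

theorem alphaCarry_eq_padicValNat_multinomial (p : ℕ) (s : Multiset ℕ) :
    alphaCarry p s = padicValNat p s.multinomial := by
  rw [alphaCarry, ← s.prod_map_factorial_mul_multinomial,
    Nat.mul_div_cancel_left _ (Multiset.prod_pos fun x hx => ?_)]
  obtain ⟨y, -, rfl⟩ := Multiset.mem_map.mp hx
  exact Nat.factorial_pos y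

theorem alphaCarry_cons_zero (p : ℕ) (s : Multiset ℕ) :
    alphaCarry p (0 ::ₘ s) = alphaCarry p s := by
  simp only [alphaCarry_eq_padicValNat_multinomial, Multiset.multinomial_cons_zero]

theorem alphaCarry_cons_cons (p : ℕ) [Fact p.Prime] (a b : ℕ) (s : Multiset ℕ) :
    alphaCarry p (a ::ₘ b ::ₘ s) =
      padicValNat p ((a + b).choose a) + alphaCarry p ((a + b) ::ₘ s) := by
  simp only [alphaCarry_eq_padicValNat_multinomial, Multiset.multinomial_cons_cons]
  exact padicValNat.mul (Nat.choose_pos (Nat.le_add_right a b)).ne'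
    (Multiset.multinomial_pos _).ne'

theorem multisetOf_comp_perm {k : ℕ} (f : Fin k → ℕ) (σ : Equiv.Perm (Fin k)) :
    multisetOf (f ∘ σ) = multisetOf f := by
  rw [multisetOf, multisetOf, ← Multiset.map_map]
  congr 1
  exact congrArg Finset.val (Finset.map_univ_equiv σ)

theorem multisetOf_succAbove {k : ℕ} (f : Fin (k + 1) → ℕ) (c : Fin (k + 1)) :
    multisetOf f = f c ::ₘ multisetOf (f ∘ c.succAbove) := by
  rw [multisetOf, multisetOf, Fin.univ_succAbove k c, Finset.cons_val, Multiset.map_cons,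
    Finset.map_val, Multiset.map_map]
  rfl

theorem multisetOf_eq_cons_cons {k : ℕ} {f g : Fin k → ℕ} {a b : Fin k} (hab : a ≠ b)
    (hfg : ∀ v, v ≠ a → v ≠ b → f v = g v) :
    ∃ M, multisetOf f = f a ::ₘ f b ::ₘ M ∧ multisetOf g = g a ::ₘ g b ::ₘ M := by
  classical
  set rest := ((Finset.univ.val : Multiset (Fin k)).erase a).erase b
  have huniv : Finset.univ.val = a ::ₘ b ::ₘ rest := by
    rw [Multiset.cons_erase ((Multiset.mem_erase_of_ne hab.symm).mpr (Finset.mem_univ b)),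
      Multiset.cons_erase (Finset.mem_univ a)]
  have hrest : ∀ v ∈ rest, v ≠ a ∧ v ≠ b := fun v hv => by
    have hnd := Finset.univ.nodup.erase a
    refine ⟨?_, ((hnd.mem_erase_iff).mp hv).1⟩
    exact ((Finset.univ.nodup.mem_erase_iff).mp (Multiset.mem_of_mem_erase hv)).1
  refine ⟨rest.map f, by rw [multisetOf, huniv, Multiset.map_cons, Multiset.map_cons], ?_⟩
  rw [multisetOf, huniv, Multiset.map_cons, Multiset.map_cons,
    Multiset.map_congr rfl fun v hv => hfg v (hrest v hv).1 (hrest v hv).2]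

theorem exMult_mapDomain_succAbove {k : ℕ} (c : Fin (k + 1)) (d : Fin k →₀ ℕ) :
    exMult (Finsupp.mapDomain c.succAbove d) = 0 ::ₘ exMult d := by
  rw [exMult, multisetOf_succAbove _ c,
    Finsupp.mapDomain_of_notMem_range _ _ fun ⟨j, hj⟩ => Fin.succAbove_ne c j hj]
  congr 2
  funext j
  exact Finsupp.mapDomain_apply Fin.succAbove_right_injective d j

section Substitution

variable {R σ τ : Type*} [CommSemiring R]

theorem eq_mapDomain_of_coeff_rename_monomial_ne_zero (e : σ → τ) {d : σ →₀ ℕ}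
    {ν : τ →₀ ℕ} {r : R} (h : coeff ν (rename e (monomial d r)) ≠ 0) :
    ν = Finsupp.mapDomain e d := by
  classical
  rw [rename_monomial, coeff_monomial] at h
  exact (ite_ne_right_iff.mp h).1.symm

theorem aeval_update_X_add_X_monomial [DecidableEq σ] (a b : σ) (μ : σ →₀ ℕ) :
    aeval (Function.update (X : σ → MvPolynomial σ R) a (X a + X b)) (monomial μ (1 : R)) =
      ∑ t ∈ Finset.range (μ a + 1),
        monomial (μ.erase a + Finsupp.single a t + Finsupp.single b (μ a - t))
          ((μ a).choose t : R) := by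
  have herase : aeval (Function.update (X : σ → MvPolynomial σ R) a (X a + X b))
      (monomial (μ.erase a) (1 : R)) = monomial (μ.erase a) 1 := by
    rw [aeval_monomial, monomial_eq, map_one, map_one]
    refine congrArg _ (Finsupp.prod_congr fun v hv => ?_)
    rw [Function.update_of_ne (by rintro rfl; simp at hv)]
  conv_lhs => rw [← Finsupp.erase_add_single a μ]
  rw [monomial_add_single, map_mul, map_pow, aeval_X, Function.update_self, herase, add_pow,
    Finset.mul_sum]
  refine Finset.sum_congr rfl fun t _ => ?_
  rw [monomial_add_single, monomial_add_single, ← map_natCast (C : R →+* MvPolynomial σ R),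
    monomial_eq, monomial_eq, map_one]
  ring

end Substitution

theorem alphaCarry_exMult_of_coeff_aeval_update_X_add_X {p k : ℕ} [Fact p.Prime]
    {a b : Fin k} (hab : a ≠ b) {μ ν : Fin k →₀ ℕ} (hμb : μ b = 0)
    (h : coeff ν (aeval (Function.update (X : Fin k → MvPolynomial (Fin k) (ZMod p)) a
      (X a + X b)) (monomial μ (1 : ZMod p))) ≠ 0) :
    alphaCarry p (exMult ν) = alphaCarry p (exMult μ) := by
  rw [aeval_update_X_add_X_monomial, coeff_sum] at h
  obtain ⟨t, ht, hcoeff⟩ := Finset.exists_ne_zero_of_sum_ne_zero h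
  rw [coeff_monomial] at hcoeff
  obtain ⟨rfl, hchoose⟩ := ite_ne_right_iff.mp hcoeff
  set ν := μ.erase a + Finsupp.single a t + Finsupp.single b (μ a - t)
  have hνa : ν a = t := by simp [ν, hab]
  have hνb : ν b = μ a - t := by simp [ν, hab.symm, hμb]
  obtain ⟨M, hν, hμ⟩ := multisetOf_eq_cons_cons (f := ν) (g := μ) hab fun v hva hvb => by
    simp [ν, Finsupp.erase_ne hva, hva.symm, hvb.symm]
  have hvaluation : padicValNat p ((μ a).choose t) = 0 :=
    padicValNat.eq_zero_of_not_dvd fun hdvd =>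
      hchoose ((ZMod.natCast_eq_zero_iff _ _).mpr hdvd)
  have htn : t ≤ μ a := Nat.lt_succ_iff.mp (Finset.mem_range.mp ht)
  rw [exMult, exMult, hν, hμ, hνa, hνb, hμb, alphaCarry_cons_cons, Nat.add_sub_cancel' htn,
    hvaluation, zero_add, Multiset.cons_swap (μ a), alphaCarry_cons_zero]

def CarryPreserving (R : Type*) [CommRing R] (p : ℕ) {k n : ℕ}
    (φ : Fin k → MvPolynomial (Fin n) R) : Prop :=
  ∀ (d : Fin k →₀ ℕ) (ν : Fin n →₀ ℕ), coeff ν (aeval φ (monomial d (1 : R))) ≠ 0 →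
    alphaCarry p (exMult ν) = alphaCarry p (exMult d)

theorem CarryPreserving.alphaCarry_of_coeff_tau {R : Type*} [CommRing R] {p k n : ℕ}
    {φ : Fin k → MvPolynomial (Fin n) R} (hφ : CarryPreserving R p φ) {lam : Fin k → ℕ}
    {ν : Fin n →₀ ℕ} (h : coeff ν (aeval φ (tau R lam)) ≠ 0) :
    alphaCarry p (exMult ν) = alphaCarry p (multisetOf lam) := by
  rw [tau, map_sum, coeff_sum] at h
  obtain ⟨d, hd, hν⟩ := Finset.exists_ne_zero_of_sum_ne_zero h
  obtain ⟨σ, -, rfl⟩ := Finset.mem_image.mp hd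
  rw [hφ _ _ hν, exMult, Finsupp.coe_equivFunOnFinite_symm]
  exact congrArg (alphaCarry p) (multisetOf_comp_perm lam σ)

theorem carryPreserving_X_succAbove (R : Type*) [CommRing R] (p : ℕ) {k : ℕ}
    (c : Fin (k + 1)) :
    CarryPreserving R p fun j : Fin k => (X (c.succAbove j) : MvPolynomial (Fin (k + 1)) R) := by
  intro d ν h
  have h' : coeff ν (rename c.succAbove (monomial d (1 : R))) ≠ 0 := by rwa [rename_eq_aeval]
  rw [eq_mapDomain_of_coeff_rename_monomial_ne_zero _ h', exMult_mapDomain_succAbove,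
    alphaCarry_cons_zero]

theorem carryPreserving_update_X_add_X_succAbove {p k : ℕ} [Fact p.Prime] {a b : Fin (k + 1)}
    (hab : a ≠ b) :
    CarryPreserving (ZMod p) p fun j : Fin k =>
      Function.update (X : Fin (k + 1) → MvPolynomial (Fin (k + 1)) (ZMod p)) a (X a + X b)
        (b.succAbove j) := by
  intro d ν h
  have h' : coeff ν (aeval (Function.update (X : Fin (k + 1) → MvPolynomial _ (ZMod p)) a
      (X a + X b)) (rename b.succAbove (monomial d (1 : ZMod p)))) ≠ 0 := by
    rwa [aeval_rename]
  rw [rename_monomial] at h'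
  rw [alphaCarry_exMult_of_coeff_aeval_update_X_add_X hab
    (Finsupp.mapDomain_of_notMem_range _ _ fun ⟨j, hj⟩ => Fin.succAbove_ne b j hj) h',
    exMult_mapDomain_succAbove, alphaCarry_cons_zero]

theorem carryPreserving_face {p k : ℕ} [Fact p.Prime] {i : ℕ} (hi1 : 1 ≤ i) (hik : i ≤ k) :
    CarryPreserving (ZMod p) p fun j : Fin k =>
      if (j : ℕ) + 1 < i then (X j.castSucc : MvPolynomial (Fin (k + 1)) (ZMod p))
      else if (j : ℕ) + 1 = i then X j.castSucc + X j.succ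
      else X j.succ := by
  set i' : Fin k := ⟨i - 1, by omega⟩
  convert carryPreserving_update_X_add_X_succAbove (p := p)
    (Fin.castSucc_lt_succ (i := i')).ne using 2 with j
  rcases lt_trichotomy ((j : ℕ) + 1) i with hj | hj | hj
  · rw [if_pos hj, Fin.succAbove_of_castSucc_lt _ _ (by simp [Fin.lt_def, i']; omega),
      Function.update_of_ne (by simp [Fin.ext_iff, i']; omega)]
  · obtain rfl : j = i' := Fin.ext (by simp [i']; omega)
    rw [if_neg hj.not_lt, if_pos hj, Fin.succAbove_of_castSucc_lt _ _ Fin.castSucc_lt_succ,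
      Function.update_self]
  · rw [if_neg (by omega), if_neg (by omega),
      Fin.succAbove_of_le_castSucc _ _ (by simp [Fin.le_def, i']; omega),
      Function.update_of_ne (by simp [Fin.ext_iff, i']; omega)]

theorem ne_zero_or_ne_zero_of_add_ne_zero {M : Type*} [AddZeroClass M] {a b : M}
    (h : a + b ≠ 0) : a ≠ 0 ∨ b ≠ 0 := by
  contrapose! h
  rw [h.1, h.2, add_zero]

theorem MvPolynomial.coeff_ne_zero_of_neg_one_pow_mul {R σ : Type*} [CommRing R]
    {ν : σ →₀ ℕ} {q : MvPolynomial σ R} (i : ℕ) (h : coeff ν ((-1) ^ i * q) ≠ 0) :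
    coeff ν q ≠ 0 := by
  rw [← map_one C, ← map_neg, ← map_pow, coeff_C_mul] at h
  exact right_ne_zero_of_mul h

theorem statement14_general (p : ℕ) (hp : p.Prime) (k m : ℕ) (hmk : m ≤ k)
    (lam : Fin k → ℕ)
    (ν : Fin (k + 1) →₀ ℕ)
    (hν : MvPolynomial.coeff ν (delta (ZMod p) m k (tau (ZMod p) lam)) ≠ 0) :
    alphaCarry p (exMult ν) = alphaCarry p (multisetOf lam) := by
  have := Fact.mk hp
  rw [delta, coeff_add, coeff_add, coeff_sum] at hν
  obtain (h | h) | h :=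
    (ne_zero_or_ne_zero_of_add_ne_zero hν).imp_left ne_zero_or_ne_zero_of_add_ne_zero
  · refine (carryPreserving_X_succAbove (ZMod p) p 0).alphaCarry_of_coeff_tau ?_
    simpa only [Fin.succAbove_zero] using h
  · obtain ⟨i, hi, h⟩ := Finset.exists_ne_zero_of_sum_ne_zero h
    obtain ⟨hi1, him⟩ := Finset.mem_Icc.mp hi
    exact (carryPreserving_face hi1 (him.trans hmk)).alphaCarry_of_coeff_tau
      (coeff_ne_zero_of_neg_one_pow_mul i h)
  · refine (carryPreserving_X_succAbove (ZMod p) p ⟨m, by omega⟩).alphaCarry_of_coeff_tau ?_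
    convert coeff_ne_zero_of_neg_one_pow_mul (m + 1) h using 5 with j
    simp only [Fin.succAbove, Fin.lt_def, Fin.val_castSucc, apply_ite X, Nat.lt_iff_add_one_le]

/-- Every monomial occurring with nonzero coefficient in
`δ_m(τλ)` over `ℤ/pℤ` has the same carry count as `λ`. -/
theorem statement14 (p : ℕ) (hp : p.Prime) (k m : ℕ) (hm : 1 ≤ m) (hmk : m ≤ k)
    (lam : Fin k → ℕ) (hpos : ∀ i, 0 < lam i)
    (ν : Fin (k + 1) →₀ ℕ)
    (hν : MvPolynomial.coeff ν (delta (ZMod p) m k (tau (ZMod p) lam)) ≠ 0) :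
    alphaCarry p (exMult ν) = alphaCarry p (multisetOf lam) :=
  statement14_general p hp k m hmk lam ν hν
end

section
/- Let n ≥ 1 and let k satisfy σ_2(n) ≤ k ≤ n. Then there exists a multiset of powers of 2 of cardinality k whose sum is n; that is, n can be written as a sum of exactly k powers of 2. -/
open MvPolynomial

lemma base2rep (n : ℕ) : ∃ s : Multiset ℕ, IsPowOf 2 s ∧
    Multiset.card s = sigmaDigits 2 n ∧ s.sum = n := by
  induction n using Nat.strong_induction_on with
  | _ n ih =>
    rcases Nat.eq_zero_or_pos n with rfl | hn
    · exact ⟨0, by simp [IsPowOf], by simp [sigmaDigits], by simp⟩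
    obtain ⟨s, hpow, hcard, hsum⟩ := ih (n / 2) (Nat.div_lt_self hn one_lt_two)
    have hdig : sigmaDigits 2 n = n % 2 + sigmaDigits 2 (n / 2) := by
      unfold sigmaDigits
      rw [Nat.digits_def' (le_refl 2) hn]
      simp
    refine ⟨Multiset.replicate (n % 2) 1 + s.map (2 * ·), ?_, ?_, ?_⟩
    · intro x hx
      simp only [Multiset.mem_add, Multiset.mem_replicate, Multiset.mem_map] at hx
      rcases hx with ⟨_, rfl⟩ | ⟨y, hy, rfl⟩
      · exact ⟨0, rfl⟩
      · obtain ⟨a, rfl⟩ := hpow y hy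
        exact ⟨a + 1, by ring⟩
    · simp [hcard, hdig]
    · have : (s.map (2 * ·)).sum = 2 * s.sum := by
        rw [Multiset.sum_map_mul_left]
        simp
      simp [this, hsum]
      omega

lemma splitstep (s : Multiset ℕ) (hpow : IsPowOf 2 s) (h : Multiset.card s < s.sum) :
    ∃ t : Multiset ℕ, IsPowOf 2 t ∧ Multiset.card t = Multiset.card s + 1 ∧
      t.sum = s.sum := by
  have hx : ∃ x ∈ s, 2 ≤ x := by
    by_contra hc
    push_neg at hc
    have := Multiset.sum_le_card_nsmul s 1 (fun x hx => by have := hc x hx; omega)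
    simp at this
    omega
  obtain ⟨x, hxs, hx2⟩ := hx
  obtain ⟨a, rfl⟩ := hpow x hxs
  have ha : 1 ≤ a := by
    by_contra h0
    interval_cases a <;> omega
  refine ⟨2 ^ (a - 1) ::ₘ 2 ^ (a - 1) ::ₘ s.erase (2 ^ a), ?_, ?_, ?_⟩
  · intro y hy
    simp only [Multiset.mem_cons] at hy
    rcases hy with rfl | rfl | hy
    · exact ⟨a - 1, rfl⟩
    · exact ⟨a - 1, rfl⟩
    · exact hpow y (Multiset.mem_of_mem_erase hy)
  · have hce := Multiset.card_erase_of_mem hxs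
    have hc : 0 < Multiset.card s := Multiset.card_pos.2 (by rintro rfl; simp at hxs)
    simp [hce, Nat.pred_eq_sub_one]
    omega
  · have hrec : (2 ^ a ::ₘ s.erase (2 ^ a)).sum = s.sum := by
      rw [Multiset.cons_erase hxs]
    have hpw : 2 ^ (a - 1) + 2 ^ (a - 1) = 2 ^ a := by
      have : a - 1 + 1 = a := by omega
      calc 2 ^ (a - 1) + 2 ^ (a - 1) = 2 ^ (a - 1 + 1) := by ring
        _ = 2 ^ a := by rw [this]
    simp only [Multiset.sum_cons] at hrec ⊢
    omega

/-- For `n ≥ 1` and `σ_2(n) ≤ k ≤ n`, the number `n` can be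
written as a sum of exactly `k` powers of `2`. -/
theorem statement18 (n k : ℕ) (hn : 1 ≤ n) (hk1 : sigmaDigits 2 n ≤ k) (hk2 : k ≤ n) :
    ∃ s : Multiset ℕ, IsPowOf 2 s ∧ Multiset.card s = k ∧ s.sum = n := by
  clear hn
  induction k, hk1 using Nat.le_induction with
  | base => exact base2rep n
  | succ k hk ih =>
    obtain ⟨s, h1, h2, h3⟩ := ih (by omega)
    obtain ⟨t, h1', h2', h3'⟩ := splitstep s h1 (by omega)
    exact ⟨t, h1', by omega, by omega⟩
end
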